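/- arXiv:2106.02421 — 7 statements merged into one kernel-verified Lean document; each statement's English description precedes it below -/
import Mathlib

section
/- Let Y be a real random variable with mean 0 and finite fourth moment. Then P(Y ≥ 0) ≥ 2^(-4/3) · (E[Y²])² / E[Y⁴]. -/
/-!
Let `A = {Y ≥ 0}` and `P = ℙ A`. On `A`, Cauchy–Schwarz against the constant `1` gives
`E[Y²; A]² ≤ P · E[Y⁴; A]` and `E[Y; A]² ≤ P · E[Y²; A]`. On `Aᶜ`, Hölder with exponents
`(3/2, 3)` applied to `-Y ≥ 0` gives `E[Y²; Aᶜ]³ ≤ E[-Y; Aᶜ]² · E[Y⁴; Aᶜ]`, and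
`E[-Y; Aᶜ] = E[Y; A]` because `E Y = 0`. Together with `(a + b)³ ≤ 4 (a³ + b³)` these yield
`(E Y²)⁶ ≤ 16 P³ (E Y⁴)³`, which is the claim after taking cube roots.
-/

open MeasureTheory ProbabilityTheory

theorem Real.rpow_mul_rpow_pow {x y p q : ℝ} (hx : 0 ≤ x) (hy : 0 ≤ y) {i j n : ℕ}
    (hp : p * n = i) (hq : q * n = j) : (x ^ p * y ^ q) ^ n = x ^ i * y ^ j := by
  rw [mul_pow, ← Real.rpow_natCast (x ^ p), ← Real.rpow_natCast (y ^ q), ← Real.rpow_mul hx,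
    ← Real.rpow_mul hy, hp, hq, Real.rpow_natCast, Real.rpow_natCast]

section Integral

variable {α : Type*} [MeasurableSpace α] {μ : Measure α}

theorem integral_rpow_mul_rpow_le {f g : α → ℝ} (hf0 : 0 ≤ᵐ[μ] f) (hg0 : 0 ≤ᵐ[μ] g)
    (hf : Integrable f μ) (hg : Integrable g μ) {p q : ℝ} (hp : 0 ≤ p) (hq : 0 ≤ q)
    (hpq : p + q = 1) :
    ∫ a, f a ^ p * g a ^ q ∂μ ≤ (∫ a, f a ∂μ) ^ p * (∫ a, g a ∂μ) ^ q := by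
  have hF := integral_nonneg_of_ae hf0
  have hG := integral_nonneg_of_ae hg0
  have hholder := ENNReal.lintegral_mul_norm_pow_le hf.1.aemeasurable.ennreal_ofReal
    hg.1.aemeasurable.ennreal_ofReal hp hq hpq
  rw [← ofReal_integral_eq_lintegral_ofReal hf hf0, ← ofReal_integral_eq_lintegral_ofReal hg hg0,
    ENNReal.ofReal_rpow_of_nonneg hF hp, ENNReal.ofReal_rpow_of_nonneg hG hq,
    ← ENNReal.ofReal_mul (by positivity)] at hholder
  have hnonneg : 0 ≤ᵐ[μ] fun a ↦ f a ^ p * g a ^ q := by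
    filter_upwards [hf0, hg0] with a hfa hga
    exact mul_nonneg (Real.rpow_nonneg hfa p) (Real.rpow_nonneg hga q)
  rw [integral_eq_lintegral_of_nonneg_ae hnonneg (by fun_prop)]
  refine ENNReal.toReal_le_of_le_ofReal (by positivity) (le_of_eq_of_le ?_ hholder)
  refine lintegral_congr_ae ?_
  filter_upwards [hf0, hg0] with a hfa hga
  rw [ENNReal.ofReal_mul (Real.rpow_nonneg hfa p), ENNReal.ofReal_rpow_of_nonneg hfa hp,
    ENNReal.ofReal_rpow_of_nonneg hga hq]

theorem sq_integral_le_measureReal_mul_integral_sq [IsFiniteMeasure μ] {f : α → ℝ}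
    (hf2 : Integrable (fun a ↦ f a ^ 2) μ) :
    (∫ a, f a ∂μ) ^ 2 ≤ μ.real Set.univ * ∫ a, f a ^ 2 ∂μ := by
  have hholder := integral_rpow_mul_rpow_le (f := fun a ↦ f a ^ 2) (g := fun _ ↦ 1)
    (ae_of_all _ fun a ↦ sq_nonneg (f a)) (ae_of_all _ fun _ ↦ zero_le_one) hf2
    (integrable_const 1) (p := 1 / 2) (q := 1 / 2) (by norm_num) (by norm_num) (by norm_num)
  have habs : ∀ a, (f a ^ 2) ^ (1 / 2 : ℝ) * (1 : ℝ) ^ (1 / 2 : ℝ) = |f a| := fun a ↦ by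
    rw [Real.one_rpow, mul_one, ← Real.sqrt_eq_rpow, Real.sqrt_sq_eq_abs]
  simp only [habs, integral_const, smul_eq_mul, mul_one] at hholder
  calc (∫ a, f a ∂μ) ^ 2 ≤ (∫ a, |f a| ∂μ) ^ 2 := by
        rw [← sq_abs]
        exact pow_le_pow_left₀ (abs_nonneg _) abs_integral_le_integral_abs 2
    _ ≤ ((∫ a, f a ^ 2 ∂μ) ^ (1 / 2 : ℝ) * μ.real Set.univ ^ (1 / 2 : ℝ)) ^ 2 :=
        pow_le_pow_left₀ (integral_nonneg fun a ↦ abs_nonneg (f a)) hholder 2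
    _ = μ.real Set.univ * ∫ a, f a ^ 2 ∂μ := by
        rw [Real.rpow_mul_rpow_pow (integral_nonneg fun a ↦ sq_nonneg (f a)) measureReal_nonneg
          (i := 1) (j := 1) (by norm_num) (by norm_num), pow_one, pow_one, mul_comm]

theorem pow_three_integral_sq_le {X : α → ℝ} (hX0 : 0 ≤ᵐ[μ] X) (hX : Integrable X μ)
    (hX4 : Integrable (fun a ↦ X a ^ 4) μ) :
    (∫ a, X a ^ 2 ∂μ) ^ 3 ≤ (∫ a, X a ∂μ) ^ 2 * ∫ a, X a ^ 4 ∂μ := by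
  have hholder := integral_rpow_mul_rpow_le hX0 (ae_of_all _ fun a ↦ by positivity) hX hX4
    (p := 2 / 3) (q := 1 / 3) (by norm_num) (by norm_num) (by norm_num)
  have hsplit : ∀ᵐ a ∂μ, X a ^ (2 / 3 : ℝ) * (X a ^ 4) ^ (1 / 3 : ℝ) = X a ^ 2 := by
    filter_upwards [hX0] with a ha
    rw [← Real.rpow_natCast (X a) 4, ← Real.rpow_mul ha, ← Real.rpow_add' ha (by norm_num)]
    norm_num
  rw [integral_congr_ae hsplit] at hholder
  calc (∫ a, X a ^ 2 ∂μ) ^ 3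
      ≤ ((∫ a, X a ∂μ) ^ (2 / 3 : ℝ) * (∫ a, X a ^ 4 ∂μ) ^ (1 / 3 : ℝ)) ^ 3 :=
        pow_le_pow_left₀ (integral_nonneg fun a ↦ sq_nonneg (X a)) hholder 3
    _ = (∫ a, X a ∂μ) ^ 2 * ∫ a, X a ^ 4 ∂μ := by
        rw [Real.rpow_mul_rpow_pow (integral_nonneg_of_ae hX0)
          (integral_nonneg fun a ↦ by positivity) (i := 2) (j := 1) (by norm_num) (by norm_num),
          pow_one]

end Integral

theorem add_pow_six_le {a b c d e P : ℝ} (ha : 0 ≤ a) (hb : 0 ≤ b) (hd : 0 ≤ d) (hP : 0 ≤ P)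
    (h1 : a ^ 2 ≤ P * c) (h2 : e ^ 2 ≤ P * a) (h3 : b ^ 3 ≤ e ^ 2 * d) :
    (a + b) ^ 6 ≤ 16 * P ^ 3 * (c + d) ^ 3 := by
  have hb3 : b ^ 3 ≤ P * a * d := h3.trans (mul_le_mul_of_nonneg_right h2 hd)
  have hcube : (a + b) ^ 3 ≤ 4 * a * P * (c + d) := by
    nlinarith [mul_nonneg (mul_nonneg ha hb) (add_nonneg ha hb), sq_nonneg (a - b),
      mul_le_mul_of_nonneg_left h1 ha]
  calc (a + b) ^ 6 = ((a + b) ^ 3) ^ 2 := by ring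
    _ ≤ (4 * a * P * (c + d)) ^ 2 := pow_le_pow_left₀ (by positivity) hcube 2
    _ = 16 * a ^ 2 * P ^ 2 * (c + d) ^ 2 := by ring
    _ ≤ 16 * (P * (c + d)) * P ^ 2 * (c + d) ^ 2 := by gcongr; nlinarith
    _ = 16 * P ^ 3 * (c + d) ^ 3 := by ring

theorem rpow_neg_four_thirds_mul_sq_div_le {x y P : ℝ} (hy : 0 ≤ y) (hP : 0 ≤ P)
    (h : x ^ 6 ≤ 16 * P ^ 3 * y ^ 3) : 2 ^ (-(4 : ℝ) / 3) * x ^ 2 / y ≤ P := by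
  rcases hy.eq_or_lt with rfl | hy
  · simpa using hP
  have h16 : ((2 : ℝ) ^ (4 / 3 : ℝ)) ^ 3 = 16 := by
    rw [← Real.rpow_natCast, ← Real.rpow_mul zero_le_two]
    norm_num
  have hsq : x ^ 2 ≤ 2 ^ (4 / 3 : ℝ) * P * y := by
    refine (pow_le_pow_iff_left₀ (by positivity) (by positivity) three_ne_zero).1 ?_
    rw [mul_pow, mul_pow, h16, ← pow_mul]
    exact h
  rw [div_le_iff₀ hy, neg_div, Real.rpow_neg zero_le_two, inv_mul_le_iff₀ (by positivity)]
  linarith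

theorem pow_six_integral_sq_le {Ω : Type*} [MeasurableSpace Ω] {μ : Measure Ω}
    [IsFiniteMeasure μ] {Y : Ω → ℝ} (hY : MemLp Y 4 μ) (hmean : ∫ ω, Y ω ∂μ = 0) :
    (∫ ω, Y ω ^ 2 ∂μ) ^ 6 ≤ 16 * μ.real {ω | 0 ≤ Y ω} ^ 3 * (∫ ω, Y ω ^ 4 ∂μ) ^ 3 := by
  set A := {ω | 0 ≤ Y ω}
  have hA : NullMeasurableSet A μ := nullMeasurableSet_le aemeasurable_const hY.1.aemeasurable
  have hY1 : Integrable Y μ := hY.integrable (by norm_num)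
  have hY2 : Integrable (fun ω ↦ Y ω ^ 2) μ := (hY.mono_exponent (by norm_num)).integrable_sq
  have hY4 : Integrable (fun ω ↦ Y ω ^ 4) μ := by
    simpa only [Real.norm_eq_abs, Even.pow_abs (by decide : Even 4)] using
      hY.integrable_norm_pow (p := 4) (by norm_num)
  have hsq : ∀ ω, (Y ω ^ 2) ^ 2 = Y ω ^ 4 := fun ω ↦ by ring
  have hY4A : (∫ ω in A, Y ω ^ 2 ∂μ) ^ 2 ≤ μ.real A * ∫ ω in A, Y ω ^ 4 ∂μ := by
    have := sq_integral_le_measureReal_mul_integral_sq (μ := μ.restrict A)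
      (f := fun ω ↦ Y ω ^ 2) (by simpa only [hsq] using hY4.restrict)
    simpa only [hsq, measureReal_restrict_apply_univ] using this
  have hY2A : (∫ ω in A, Y ω ∂μ) ^ 2 ≤ μ.real A * ∫ ω in A, Y ω ^ 2 ∂μ := by
    simpa only [measureReal_restrict_apply_univ] using
      sq_integral_le_measureReal_mul_integral_sq (μ := μ.restrict A) hY2.restrict
  have hY2Ac : (∫ ω in Aᶜ, Y ω ^ 2 ∂μ) ^ 3 ≤ (∫ ω in A, Y ω ∂μ) ^ 2 * ∫ ω in Aᶜ, Y ω ^ 4 ∂μ := by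
    have hneg : ∀ᵐ ω ∂μ.restrict Aᶜ, 0 ≤ -Y ω :=
      (ae_restrict_mem₀ hA.compl).mono fun ω (hω : ¬0 ≤ Y ω) ↦ by linarith
    have hmean' : ∫ ω in Aᶜ, -Y ω ∂μ = ∫ ω in A, Y ω ∂μ := by
      rw [integral_neg, neg_eq_iff_add_eq_zero, add_comm, integral_add_compl₀ hA hY1, hmean]
    have hY4' : Integrable (fun ω ↦ (-Y ω) ^ 4) (μ.restrict Aᶜ) := by
      simpa [Even.neg_pow (by decide : Even 4)] using hY4.restrict
    simpa [hmean', Even.neg_pow (by decide : Even 4)] using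
      pow_three_integral_sq_le hneg hY1.neg.restrict hY4'
  rw [← integral_add_compl₀ hA hY2, ← integral_add_compl₀ hA hY4]
  exact add_pow_six_le (integral_nonneg fun _ ↦ by positivity)
    (integral_nonneg fun _ ↦ by positivity) (integral_nonneg fun _ ↦ by positivity)
    measureReal_nonneg hY4A hY2A hY2Ac

theorem stmt0_general {Ω : Type*} [MeasureSpace Ω] [IsProbabilityMeasure (ℙ : Measure Ω)]
    (Y : Ω → ℝ) (hL4 : MemLp Y 4) (hmean : ∫ ω, Y ω = 0) :
    (2 : ℝ) ^ (-(4 : ℝ) / 3) * (∫ ω, (Y ω) ^ 2) ^ 2 / ∫ ω, (Y ω) ^ 4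
      ≤ (ℙ {ω | 0 ≤ Y ω}).toReal :=
  rpow_neg_four_thirds_mul_sq_div_le (integral_nonneg fun _ ↦ by positivity) measureReal_nonneg
    (pow_six_integral_sq_le hL4 hmean)

/-- Paley–Zygmund type: for a mean-zero random variable `Y` with finite nonzero
fourth moment, `P(Y ≥ 0) ≥ 2^(-4/3) (E Y²)² / E Y⁴`. -/
theorem stmt0 {Ω : Type*} [MeasureSpace Ω] [IsProbabilityMeasure (ℙ : Measure Ω)]
    (Y : Ω → ℝ) (hmeas : Measurable Y) (hL4 : MemLp Y 4)
    (hmean : ∫ ω, Y ω = 0) (hpos : 0 < ∫ ω, (Y ω) ^ 4) :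
    (2 : ℝ) ^ (-(4 : ℝ) / 3) * (∫ ω, (Y ω) ^ 2) ^ 2 / ∫ ω, (Y ω) ^ 4
      ≤ (ℙ {ω | 0 ≤ Y ω}).toReal :=
  stmt0_general Y hL4 hmean
end

section
/- Let Y₁, …, Yₙ be independent mean-zero real random variables such that E[Yᵢ⁴] ≤ L·(E[Yᵢ²])² for all i, where L ≥ 1 is a constant. Then for Y = Y₁ + ⋯ + Yₙ, one has E[Y⁴] ≤ max{L, 3}·(E[Y²])². -/
/-!
Write `S = X + T` with `X` one summand and `T` the sum of the others, which is independent
of `X`. Since both have mean zero, the odd cross terms vanish and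
`E S⁴ = E X⁴ + 6 E X² E T² + E T⁴`, `E S² = E X² + E T²`. If both fourth moments are bounded by
`M` times the squared second moment with `M ≥ 3`, then so is `E S⁴`, as `6 ≤ 2M`; induct on the
number of summands with `M = max L 3`.
-/

open MeasureTheory ProbabilityTheory Finset
open scoped ENNReal

section

variable {Ω : Type*} {mΩ : MeasurableSpace Ω} {μ : Measure Ω}

lemma MeasureTheory.MemLp.integrable_pow [IsFiniteMeasure μ] {f : Ω → ℝ} {p : ℝ≥0∞}
    (hf : MemLp f p μ) {k : ℕ} (hk : (k : ℝ≥0∞) ≤ p) :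
    Integrable (fun ω ↦ f ω ^ k) μ :=
  (hf.mono_exponent hk).integrable_norm_pow'.mono' (hf.aestronglyMeasurable.pow k)
    (ae_of_all _ fun ω ↦ by simp [norm_pow])

lemma ProbabilityTheory.IndepFun.integral_add_pow [IsFiniteMeasure μ] {X Y : Ω → ℝ}
    (hXY : IndepFun X Y μ) {n : ℕ} (hX : MemLp X n μ) (hY : MemLp Y n μ) :
    ∫ ω, (X ω + Y ω) ^ n ∂μ =
      ∑ k ∈ range (n + 1), (∫ ω, X ω ^ k ∂μ) * (∫ ω, Y ω ^ (n - k) ∂μ) * n.choose k := by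
  have hpow (k : ℕ) : IndepFun (fun ω ↦ X ω ^ k) (fun ω ↦ Y ω ^ (n - k)) μ :=
    hXY.comp (measurable_id.pow_const k) (measurable_id.pow_const (n - k))
  simp_rw [add_pow]
  rw [integral_finsetSum]
  · refine sum_congr rfl fun k _ ↦ ?_
    rw [integral_mul_const, (hpow k).integral_fun_mul_eq_mul_integral
      (hX.aestronglyMeasurable.pow k) (hY.aestronglyMeasurable.pow (n - k))]
  · intro k hk
    have hkn : k ≤ n := Nat.lt_succ_iff.mp (mem_range.mp hk)
    exact ((hpow k).integrable_mul (hX.integrable_pow (by exact_mod_cast hkn))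
      (hY.integrable_pow (by exact_mod_cast n.sub_le k))).mul_const _

section MeanZero

variable [IsProbabilityMeasure μ] {X Y : Ω → ℝ}

lemma ProbabilityTheory.IndepFun.integral_add_sq_of_integral_eq_zero (hXY : IndepFun X Y μ)
    (hX : MemLp X 2 μ) (hY : MemLp Y 2 μ) (hX₀ : ∫ ω, X ω ∂μ = 0) (hY₀ : ∫ ω, Y ω ∂μ = 0) :
    ∫ ω, (X ω + Y ω) ^ 2 ∂μ = ∫ ω, X ω ^ 2 ∂μ + ∫ ω, Y ω ^ 2 ∂μ := by
  rw [hXY.integral_add_pow (n := 2) (by exact_mod_cast hX) (by exact_mod_cast hY)]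
  simp [sum_range_succ, hX₀, hY₀, add_comm]

lemma ProbabilityTheory.IndepFun.integral_add_pow_four_of_integral_eq_zero
    (hXY : IndepFun X Y μ) (hX : MemLp X 4 μ) (hY : MemLp Y 4 μ)
    (hX₀ : ∫ ω, X ω ∂μ = 0) (hY₀ : ∫ ω, Y ω ∂μ = 0) :
    ∫ ω, (X ω + Y ω) ^ 4 ∂μ =
      ∫ ω, X ω ^ 4 ∂μ + 6 * (∫ ω, X ω ^ 2 ∂μ) * (∫ ω, Y ω ^ 2 ∂μ) + ∫ ω, Y ω ^ 4 ∂μ := by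
  rw [hXY.integral_add_pow (n := 4) (by exact_mod_cast hX) (by exact_mod_cast hY)]
  simp only [sum_range_succ, range_one, sum_singleton, Nat.reduceSub, tsub_zero, tsub_self,
    pow_zero, pow_one, integral_const, probReal_univ, smul_eq_mul, hX₀, hY₀, Nat.choose]
  ring

lemma integral_sum_pow_four_le {ι : Type*} {Y : ι → Ω → ℝ} (hindep : iIndepFun Y μ)
    (hY : ∀ i, MemLp (Y i) 4 μ) (hY₀ : ∀ i, ∫ ω, Y i ω ∂μ = 0) {M : ℝ} (hM : 3 ≤ M)
    (hratio : ∀ i, ∫ ω, Y i ω ^ 4 ∂μ ≤ M * (∫ ω, Y i ω ^ 2 ∂μ) ^ 2) (s : Finset ι) :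
    ∫ ω, (∑ i ∈ s, Y i ω) ^ 4 ∂μ ≤ M * (∫ ω, (∑ i ∈ s, Y i ω) ^ 2 ∂μ) ^ 2 := by
  classical
  induction s using Finset.cons_induction with
  | empty => simp
  | cons a s ha ih =>
    have hindep' : IndepFun (Y a) (∑ i ∈ s, Y i) μ :=
      (hindep.indepFun_finsetSum_of_notMem₀
        (fun i ↦ (hY i).aestronglyMeasurable.aemeasurable) ha).symm
    have hT : MemLp (∑ i ∈ s, Y i) 4 μ := memLp_finsetSum' s fun i _ ↦ hY i
    have hT₀ : ∫ ω, (∑ i ∈ s, Y i) ω ∂μ = 0 := by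
      simp [integral_finsetSum s fun i _ ↦ (hY i).integrable (by norm_num), hY₀]
    have hX2 : 0 ≤ ∫ ω, Y a ω ^ 2 ∂μ := integral_nonneg fun ω ↦ sq_nonneg _
    have hT2 : 0 ≤ ∫ ω, (∑ i ∈ s, Y i ω) ^ 2 ∂μ := integral_nonneg fun ω ↦ sq_nonneg _
    simp only [sum_cons]
    have h4 := hindep'.integral_add_pow_four_of_integral_eq_zero (hY a) hT (hY₀ a) hT₀
    have h2 := hindep'.integral_add_sq_of_integral_eq_zero ((hY a).mono_exponent (by norm_num))
      (hT.mono_exponent (by norm_num)) (hY₀ a) hT₀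
    simp only [Finset.sum_apply] at h4 h2
    rw [h4, h2]
    nlinarith [hratio a, mul_nonneg hX2 hT2]

end MeanZero

end

theorem stmt1_general {Ω : Type*} [MeasureSpace Ω] [IsProbabilityMeasure (ℙ : Measure Ω)]
    (n : ℕ) (Y : Fin n → Ω → ℝ)
    (hindep : iIndepFun Y ℙ)
    (hL4 : ∀ i, MemLp (Y i) 4)
    (hmean : ∀ i, ∫ ω, Y i ω = 0)
    (L : ℝ)
    (hratio : ∀ i, ∫ ω, (Y i ω) ^ 4 ≤ L * (∫ ω, (Y i ω) ^ 2) ^ 2) :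
    ∫ ω, (∑ i, Y i ω) ^ 4 ≤ max L 3 * (∫ ω, (∑ i, Y i ω) ^ 2) ^ 2 :=
  integral_sum_pow_four_le hindep hL4 hmean (le_max_right L 3)
    (fun i ↦ (hratio i).trans (by gcongr; exact le_max_left L 3)) univ

/-- If `Y₁, …, Yₙ` are independent, mean zero, with `E Yᵢ⁴ ≤ L (E Yᵢ²)²` for some `L ≥ 1`,
then their sum `Y` satisfies `E Y⁴ ≤ max L 3 · (E Y²)²`. -/
theorem stmt1 {Ω : Type*} [MeasureSpace Ω] [IsProbabilityMeasure (ℙ : Measure Ω)]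
    (n : ℕ) (Y : Fin n → Ω → ℝ)
    (hindep : iIndepFun Y ℙ)
    (hmeas : ∀ i, Measurable (Y i)) (hL4 : ∀ i, MemLp (Y i) 4)
    (hmean : ∀ i, ∫ ω, Y i ω = 0)
    (L : ℝ) (hL : 1 ≤ L)
    (hratio : ∀ i, ∫ ω, (Y i ω) ^ 4 ≤ L * (∫ ω, (Y i ω) ^ 2) ^ 2) :
    ∫ ω, (∑ i, Y i ω) ^ 4 ≤ max L 3 * (∫ ω, (∑ i, Y i ω) ^ 2) ^ 2 :=
  stmt1_general n Y hindep hL4 hmean L hratio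
end

section
/- Let θ = (θ₁, …, θ_d) be uniformly distributed on the unit sphere S^{d-1} ⊆ ℝ^d, and let a₁, …, a_d be nonnegative reals. Then the random variable X = Σⱼ aⱼθⱼ² satisfies E[(X − E X)⁴] ≤ 15·(E[(X − E X)²])². -/
/-!
Only coordinate swaps and the normalized Hadamard map
`(θⱼ, θₗ) ↦ ((θⱼ + θₗ)/√2, (θⱼ - θₗ)/√2)` of a coordinate plane are needed. Invariance under them,
weighted by functions of the remaining coordinates, together with `∑ₖ θₖ² = 1`, determines every
moment up to degree 8: `E[θᵢ²θⱼ²θₖ²θₗ²] = N / (d(d+2)(d+4)(d+6))`, where `N` is the corresponding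
moment `E[gᵢ²gⱼ²gₖ²gₗ²]` of a standard Gaussian vector.

With `cⱼ = aⱼ - mean(a)` we have `X - EX = ∑ cⱼθⱼ²` on the sphere and `∑ cⱼ = 0`, so, writing
`A = ∑ cⱼ²`, `E(X - EX)² = 2A / (d(d+2))` and, for `d ≥ 3`,
`E(X - EX)⁴ = (12A² + 48 ∑ cⱼ⁴) / (d(d+2)(d+4)(d+6)) ≤ 60A² / (d(d+2))²`.
For `d ≤ 1`, `X` is constant; for `d = 2`, `(X - EX)² ≤ A/2` pointwise, so that
`E(X - EX)⁴ ≤ (A/2) E(X - EX)²`.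
-/

open MeasureTheory ProbabilityTheory Finset

variable {d : ℕ}

section sums
variable {ι : Type*} [Fintype ι]

lemma Fintype.sum_sub_mean_eq_zero (a : ι → ℝ) :
    ∑ j, (a j - (∑ n, a n) / Fintype.card ι) = 0 := by
  rcases isEmpty_or_nonempty ι with hι | hι
  · simp
  · rw [Finset.sum_sub_distrib, sum_const, card_univ, nsmul_eq_mul,
      mul_div_cancel₀ _ (by positivity), sub_self]

variable {f : ι → ℝ} {c : ℝ}

lemma Fintype.sum_eq_add_mul_of_forall_ne (i : ι) (h : ∀ k, k ≠ i → f k = c) :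
    ∑ k, f k = f i + (Fintype.card ι - 1) * c := by
  have h' := Fintype.sum_eq_single i (f := fun k => f k - c) fun k hk => sub_eq_zero.2 (h k hk)
  rw [Finset.sum_sub_distrib, sum_const, card_univ, nsmul_eq_mul] at h'
  linarith

lemma Fintype.sum_eq_add_add_mul_of_forall_ne {i j : ι} (hij : i ≠ j)
    (h : ∀ k, k ≠ i → k ≠ j → f k = c) :
    ∑ k, f k = f i + f j + (Fintype.card ι - 2) * c := by
  have h' := Fintype.sum_eq_add i j hij (f := fun k => f k - c) fun k hk =>
    sub_eq_zero.2 (h k hk.1 hk.2)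
  rw [Finset.sum_sub_distrib, sum_const, card_univ, nsmul_eq_mul] at h'
  linarith

end sums

/-- `E[gᵢ² gⱼ²]` and `E[gᵢ² gⱼ² gₖ² gₗ²]` for a standard Gaussian vector `g`: since
`E g²ⁿ⁺² = (2n + 1) E g²ⁿ`, each further factor `gₘ²` contributes `1 + 2 *` (number of earlier
occurrences of `m`). -/
def gaussSqMoment₂ (i j : Fin d) : ℝ := 1 + 2 * if j = i then 1 else 0

def gaussSqMoment₄ (i j k l : Fin d) : ℝ :=
  (1 + 2 * ((if l = i then 1 else 0) + (if l = j then 1 else 0) + (if l = k then 1 else 0))) *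
    (1 + 2 * ((if k = i then 1 else 0) + (if k = j then 1 else 0))) * gaussSqMoment₂ i j

section gaussSums
variable {c : Fin d → ℝ} (hc : ∑ n, c n = 0)
include hc

lemma sum_mul_gaussSqMoment₂ :
    ∑ i, ∑ j, c i * c j * gaussSqMoment₂ i j = 2 * ∑ n, (c n) ^ 2 := by
  simp only [gaussSqMoment₂, mul_add, mul_one, Finset.sum_add_distrib, mul_ite, mul_zero,
    Finset.sum_ite_eq', Finset.mem_univ, if_true]
  simp only [mul_assoc, ← Finset.mul_sum, ← Finset.sum_mul, hc, zero_mul, zero_add]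
  rw [Finset.mul_sum]
  ring_nf

lemma sum_mul_gaussSqMoment₄ :
    ∑ i, ∑ j, ∑ k, ∑ l, c i * c j * c k * c l * gaussSqMoment₄ i j k l
      = 12 * (∑ n, (c n) ^ 2) ^ 2 + 48 * ∑ n, (c n) ^ 4 := by
  simp only [gaussSqMoment₄, gaussSqMoment₂, mul_add, add_mul, mul_one, one_mul,
    Finset.sum_add_distrib, mul_ite, ite_mul, mul_zero, zero_mul, Finset.sum_ite_eq',
    Finset.mem_univ, if_true, Finset.sum_ite_irrel, Finset.sum_const_zero]
  simp only [mul_assoc, ← Finset.mul_sum]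
  -- every term in which some index stays unpaired carries a factor `∑ n, c n = 0`
  simp only [← Finset.sum_mul, hc, zero_mul, mul_zero, add_zero, Finset.sum_const_zero, zero_add]
  rw [sq (∑ n, _), Finset.sum_mul_sum]
  simp only [Finset.mul_sum]
  ring_nf
  simp only [← Finset.sum_mul]
  ring_nf

end gaussSums

lemma integral_pow_four_le_mul_integral_sq {α : Type*} [MeasurableSpace α] {ν : Measure α}
    {g : α → ℝ} {K : ℝ} (hg₂ : Integrable (fun x => (g x) ^ 2) ν)
    (hg₄ : Integrable (fun x => (g x) ^ 4) ν) (hK : ∀ᵐ x ∂ν, (g x) ^ 2 ≤ K) :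
    ∫ x, (g x) ^ 4 ∂ν ≤ K * ∫ x, (g x) ^ 2 ∂ν := by
  rw [← integral_const_mul]
  refine integral_mono_ae hg₄ (hg₂.const_mul K) ?_
  filter_upwards [hK] with x hx
  calc (g x) ^ 4 = (g x) ^ 2 * (g x) ^ 2 := by ring
    _ ≤ K * (g x) ^ 2 := by gcongr

noncomputable def hadamardOn (i j : Fin d) (hij : i ≠ j) :
    EuclideanSpace ℝ (Fin d) ≃ₗᵢ[ℝ] EuclideanSpace ℝ (Fin d) :=
  LinearIsometry.toLinearIsometryEquiv
    { toFun := fun x => WithLp.toLp 2 fun k =>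
        if k = i then (x i + x j) / √2 else if k = j then (x i - x j) / √2 else x k
      map_add' := fun x y => by ext k; simp only [PiLp.add_apply]; split_ifs <;> ring
      map_smul' := fun c x => by
        ext k; simp only [PiLp.smul_apply, smul_eq_mul, RingHom.id_apply]; split_ifs <;> ring
      norm_map' := fun x => by
        simp only [LinearMap.coe_mk, AddHom.coe_mk, EuclideanSpace.norm_eq, Real.norm_eq_abs,
          sq_abs]
        congr 1
        rw [← sub_eq_zero, ← Finset.sum_sub_distrib,
          Fintype.sum_eq_add i j hij fun k hk => by simp [hk.1, hk.2]]
        simp [hij.symm, div_pow]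
        ring }
    rfl

section hadamardOn
variable {i j : Fin d} (hij : i ≠ j) (x : EuclideanSpace ℝ (Fin d))

lemma hadamardOn_apply_left_sq : (hadamardOn i j hij x i) ^ 2 = (x i + x j) ^ 2 / 2 := by
  simp [hadamardOn, div_pow]

lemma hadamardOn_apply_right_sq : (hadamardOn i j hij x j) ^ 2 = (x i - x j) ^ 2 / 2 := by
  simp [hadamardOn, div_pow, hij.symm]

lemma hadamardOn_apply_of_ne {k : Fin d} (hki : k ≠ i) (hkj : k ≠ j) :
    hadamardOn i j hij x k = x k := by
  simp [hadamardOn, hki, hkj]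

end hadamardOn

/-- The uniform distribution on the unit sphere, in its characterisation as the probability
measure on the sphere invariant under all linear isometries. -/
structure IsUniformOnSphere (μ : Measure (EuclideanSpace ℝ (Fin d))) : Prop where
  ae_norm_eq_one : ∀ᵐ x ∂μ, ‖x‖ = 1
  map_eq : ∀ O : EuclideanSpace ℝ (Fin d) ≃ₗᵢ[ℝ] EuclideanSpace ℝ (Fin d), μ.map O = μ

namespace IsUniformOnSphere

section

variable {μ : Measure (EuclideanSpace ℝ (Fin d))} (hμ : IsUniformOnSphere μ)
include hμ

lemma integrable [IsFiniteMeasure μ] {f : EuclideanSpace ℝ (Fin d) → ℝ} (hf : Continuous f) :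
    Integrable f μ := by
  obtain ⟨C, hC⟩ :=
    (isCompact_sphere (0 : EuclideanSpace ℝ (Fin d)) 1).exists_bound_of_continuousOn hf.continuousOn
  refine ⟨hf.aestronglyMeasurable, HasFiniteIntegral.of_bounded (C := C) ?_⟩
  filter_upwards [hμ.ae_norm_eq_one] with x hx
  exact hC x (mem_sphere_zero_iff_norm.2 hx)

lemma integral_comp (O : EuclideanSpace ℝ (Fin d) ≃ₗᵢ[ℝ] EuclideanSpace ℝ (Fin d))
    (f : EuclideanSpace ℝ (Fin d) → ℝ) : ∫ x, f (O x) ∂μ = ∫ x, f x ∂μ := by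
  conv_rhs => rw [← hμ.map_eq O]
  exact (O.toHomeomorph.measurableEmbedding.integral_map f).symm

lemma ae_sum_sq_eq_one : ∀ᵐ x ∂μ, ∑ k, (x k) ^ 2 = 1 := by
  filter_upwards [hμ.ae_norm_eq_one] with x hx
  rw [EuclideanSpace.norm_eq, Real.sqrt_eq_one] at hx
  simpa [Real.norm_eq_abs, sq_abs] using hx

variable [IsProbabilityMeasure μ] in
lemma integral_eq_sum_integral_mul_sq {f : EuclideanSpace ℝ (Fin d) → ℝ} (hf : Continuous f) :
    ∫ x, f x ∂μ = ∑ k, ∫ x, f x * (x k) ^ 2 ∂μ := by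
  rw [← integral_finsetSum _ fun k _ => hμ.integrable (by fun_prop)]
  refine integral_congr_ae ?_
  filter_upwards [hμ.ae_sum_sq_eq_one] with x hx
  rw [← Finset.mul_sum, hx, mul_one]

section weighted

variable {w : EuclideanSpace ℝ (Fin d) → ℝ} {j l : Fin d}
  (hw : ∀ x y : EuclideanSpace ℝ (Fin d), (∀ k, k ≠ j → k ≠ l → x k = y k) → w x = w y)
include hw

lemma integral_mul_weight_comp_swap (f : ℝ → ℝ → ℝ) :
    ∫ x, f (x l) (x j) * w x ∂μ = ∫ x, f (x j) (x l) * w x ∂μ := by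
  rw [← hμ.integral_comp (LinearIsometryEquiv.piLpCongrLeft 2 ℝ ℝ (Equiv.swap j l))]
  congr with x
  rw [hw _ x fun k hkj hkl => by simp [Equiv.swap_apply_of_ne_of_ne hkj hkl]]
  simp

variable (hjl : j ≠ l)
include hjl

lemma integral_mul_weight_comp_hadamardOn (f : ℝ → ℝ → ℝ) :
    ∫ x, f ((x j + x l) ^ 2 / 2) ((x j - x l) ^ 2 / 2) * w x ∂μ
      = ∫ x, f ((x j) ^ 2) ((x l) ^ 2) * w x ∂μ := by
  conv_rhs => rw [← hμ.integral_comp (hadamardOn j l hjl)]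
  congr with x
  rw [hw _ x fun k hkj hkl => hadamardOn_apply_of_ne hjl x hkj hkl, hadamardOn_apply_left_sq,
    hadamardOn_apply_right_sq]

variable [IsFiniteMeasure μ] (hwc : Continuous w)
include hwc

lemma integral_pow_four_mul_weight :
    ∫ x, (x j) ^ 4 * w x ∂μ = 3 * ∫ x, (x j) ^ 2 * (x l) ^ 2 * w x ∂μ := by
  have hH := hμ.integral_mul_weight_comp_hadamardOn hw hjl fun s t => s ^ 2 + t ^ 2
  have hS := hμ.integral_mul_weight_comp_swap hw fun s _ => s ^ 4
  have expand : ∀ x : EuclideanSpace ℝ (Fin d),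
      (((x j + x l) ^ 2 / 2) ^ 2 + ((x j - x l) ^ 2 / 2) ^ 2) * w x
        = 2⁻¹ * ((x j) ^ 4 * w x) + 2⁻¹ * ((x l) ^ 4 * w x)
          + 3 * ((x j) ^ 2 * (x l) ^ 2 * w x) :=
    fun x => by ring
  simp only [expand, ← pow_mul, add_mul] at hH
  simp (disch := exact hμ.integrable (by fun_prop)) only [integral_add, integral_const_mul] at hH
  simp only at hS
  linarith

lemma integral_pow_six_mul_weight :
    ∫ x, (x j) ^ 6 * w x ∂μ = 5 * ∫ x, (x j) ^ 4 * (x l) ^ 2 * w x ∂μ := by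
  have hH := hμ.integral_mul_weight_comp_hadamardOn hw hjl fun s t => s ^ 3 + t ^ 3
  have hS₁ := hμ.integral_mul_weight_comp_swap hw fun s _ => s ^ 6
  have hS₂ := hμ.integral_mul_weight_comp_swap hw fun s t => s ^ 4 * t ^ 2
  have expand : ∀ x : EuclideanSpace ℝ (Fin d),
      (((x j + x l) ^ 2 / 2) ^ 3 + ((x j - x l) ^ 2 / 2) ^ 3) * w x
        = 4⁻¹ * ((x j) ^ 6 * w x) + 4⁻¹ * ((x l) ^ 6 * w x)
          + (15 / 4) * ((x j) ^ 4 * (x l) ^ 2 * w x)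
          + (15 / 4) * ((x l) ^ 4 * (x j) ^ 2 * w x) :=
    fun x => by ring
  simp only [expand, ← pow_mul, add_mul] at hH
  simp (disch := exact hμ.integrable (by fun_prop)) only [integral_add, integral_const_mul] at hH
  simp only at hS₁ hS₂
  linarith

lemma integral_pow_eight_mul_weight :
    ∫ x, (x j) ^ 8 * w x ∂μ = 4 * ∫ x, (x j) ^ 6 * (x l) ^ 2 * w x ∂μ
      + 5 * ∫ x, (x j) ^ 4 * (x l) ^ 4 * w x ∂μ := by
  have hH := hμ.integral_mul_weight_comp_hadamardOn hw hjl fun s t => s ^ 4 + t ^ 4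
  have hS₁ := hμ.integral_mul_weight_comp_swap hw fun s _ => s ^ 8
  have hS₂ := hμ.integral_mul_weight_comp_swap hw fun s t => s ^ 6 * t ^ 2
  have expand : ∀ x : EuclideanSpace ℝ (Fin d),
      (((x j + x l) ^ 2 / 2) ^ 4 + ((x j - x l) ^ 2 / 2) ^ 4) * w x
        = 8⁻¹ * ((x j) ^ 8 * w x) + 8⁻¹ * ((x l) ^ 8 * w x)
          + (7 / 2) * ((x j) ^ 6 * (x l) ^ 2 * w x) + (7 / 2) * ((x l) ^ 6 * (x j) ^ 2 * w x)
          + (35 / 4) * ((x j) ^ 4 * (x l) ^ 4 * w x) :=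
    fun x => by ring
  simp only [expand, ← pow_mul, add_mul] at hH
  simp (disch := exact hμ.integrable (by fun_prop)) only [integral_add, integral_const_mul] at hH
  simp only at hS₁ hS₂
  linarith

end weighted

section unweighted

variable [IsFiniteMeasure μ] {i j : Fin d} (hij : i ≠ j)
include hij

lemma integral_pow_four_eq :
    ∫ x, (x i) ^ 4 ∂μ = 3 * ∫ x, (x i) ^ 2 * (x j) ^ 2 ∂μ := by
  simpa using hμ.integral_pow_four_mul_weight (w := fun _ => 1) (fun _ _ _ => rfl) hij
    continuous_const

lemma integral_pow_six_eq :
    ∫ x, (x i) ^ 6 ∂μ = 5 * ∫ x, (x i) ^ 4 * (x j) ^ 2 ∂μ := by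
  simpa using hμ.integral_pow_six_mul_weight (w := fun _ => 1) (fun _ _ _ => rfl) hij
    continuous_const

lemma integral_pow_eight_eq :
    ∫ x, (x i) ^ 8 ∂μ =
      4 * ∫ x, (x i) ^ 6 * (x j) ^ 2 ∂μ + 5 * ∫ x, (x i) ^ 4 * (x j) ^ 4 ∂μ := by
  simpa using hμ.integral_pow_eight_mul_weight (w := fun _ => 1) (fun _ _ _ => rfl) hij
    continuous_const

end unweighted

variable [IsProbabilityMeasure μ]

lemma integral_sq (i : Fin d) : ∫ x, (x i) ^ 2 ∂μ = 1 / d := by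
  have hd : (0 : ℝ) < d := by exact_mod_cast i.pos
  have hsym : ∀ k, ∫ x, (x k) ^ 2 ∂μ = ∫ x, (x i) ^ 2 ∂μ := fun k => by
    simpa using hμ.integral_mul_weight_comp_swap (w := fun _ => 1) (j := i) (l := k)
      (fun _ _ _ => rfl) fun s _ => s ^ 2
  have hsum := hμ.integral_eq_sum_integral_mul_sq (f := fun _ => 1) continuous_const
  simp only [one_mul, hsym, integral_const, probReal_univ, smul_eq_mul, mul_one, sum_const,
    card_univ, Fintype.card_fin, nsmul_eq_mul] at hsum
  rw [eq_div_iff hd.ne']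
  linarith

lemma integral_pow_four (i : Fin d) : ∫ x, (x i) ^ 4 ∂μ = 3 / (d * (d + 2)) := by
  have hd : (0 : ℝ) < d := by exact_mod_cast i.pos
  have hrel : ∀ k, k ≠ i → ∫ x, (x i) ^ 2 * (x k) ^ 2 ∂μ = (∫ x, (x i) ^ 4 ∂μ) / 3 := by
    intro k hki
    linarith [hμ.integral_pow_four_eq hki.symm]
  have hsum := hμ.integral_eq_sum_integral_mul_sq (f := fun x => (x i) ^ 2) (by fun_prop)
  rw [Fintype.sum_eq_add_mul_of_forall_ne i hrel, integral_sq hμ, Fintype.card_fin] at hsum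
  simp only [← pow_add] at hsum
  rw [eq_div_iff (by positivity)]
  field_simp at hsum
  linarith

lemma integral_sq_mul_sq {i j : Fin d} (hij : i ≠ j) :
    ∫ x, (x i) ^ 2 * (x j) ^ 2 ∂μ = 1 / (d * (d + 2)) := by
  have h := hμ.integral_pow_four_eq hij
  rw [hμ.integral_pow_four i, div_eq_mul_one_div 3] at h
  linarith

lemma integral_pow_six (i : Fin d) : ∫ x, (x i) ^ 6 ∂μ = 15 / (d * (d + 2) * (d + 4)) := by
  have hd : (0 : ℝ) < d := by exact_mod_cast i.pos
  have hrel : ∀ k, k ≠ i → ∫ x, (x i) ^ 4 * (x k) ^ 2 ∂μ = (∫ x, (x i) ^ 6 ∂μ) / 5 := by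
    intro k hki
    linarith [hμ.integral_pow_six_eq hki.symm]
  have hsum := hμ.integral_eq_sum_integral_mul_sq (f := fun x => (x i) ^ 4) (by fun_prop)
  rw [Fintype.sum_eq_add_mul_of_forall_ne i hrel, integral_pow_four hμ, Fintype.card_fin] at hsum
  simp only [← pow_add] at hsum
  rw [eq_div_iff (by positivity)]
  field_simp at hsum
  linarith

lemma integral_pow_four_mul_sq {i j : Fin d} (hij : i ≠ j) :
    ∫ x, (x i) ^ 4 * (x j) ^ 2 ∂μ = 3 / (d * (d + 2) * (d + 4)) := by
  have h := hμ.integral_pow_six_eq hij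
  rw [hμ.integral_pow_six i, show (15 : ℝ) = 5 * 3 by norm_num, mul_div_assoc] at h
  linarith

section distinct
variable {i j k : Fin d} (hij : i ≠ j) (hik : i ≠ k) (hjk : j ≠ k)
include hij hik hjk

lemma integral_pow_four_mul_pow_four_eq :
    ∫ x, (x i) ^ 4 * (x j) ^ 4 ∂μ = 3 * ∫ x, (x i) ^ 4 * (x j) ^ 2 * (x k) ^ 2 ∂μ := by
  have h := hμ.integral_pow_four_mul_weight (w := fun x => (x i) ^ 4)
    (fun x y h => by simp only [h i hij hik]) hjk (by fun_prop)
  calc _ = ∫ x, (x j) ^ 4 * (x i) ^ 4 ∂μ := by congr 1; ext x; ring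
    _ = _ := h
    _ = _ := by congr 2; ext x; ring

lemma integral_pow_six_mul_sq_eq :
    3 * ∫ x, (x i) ^ 6 * (x j) ^ 2 ∂μ = 5 * ∫ x, (x i) ^ 4 * (x j) ^ 4 ∂μ := by
  have h6 := hμ.integral_pow_six_mul_weight (w := fun x => (x j) ^ 2)
    (fun x y h => by simp only [h j hij.symm hjk]) hik (by fun_prop)
  have h4 := hμ.integral_pow_four_mul_pow_four_eq hik hij hjk.symm
  have hS := hμ.integral_mul_weight_comp_swap (w := fun x => (x i) ^ 4) (j := j) (l := k)
    (fun x y h => by simp only [h i hij hik]) fun s _ => s ^ 4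
  have hcomm : ∀ l, ∫ x, (x l) ^ 4 * (x i) ^ 4 ∂μ = ∫ x, (x i) ^ 4 * (x l) ^ 4 ∂μ := fun l => by
    congr 1; ext x; ring
  simp only [hcomm] at hS
  linarith

end distinct

lemma integral_pow_four_mul_pow_four {i j : Fin d} (hij : i ≠ j) (hd : 3 ≤ d) :
    ∫ x, (x i) ^ 4 * (x j) ^ 4 ∂μ = 9 / (d * (d + 2) * (d + 4) * (d + 6)) := by
  obtain ⟨k, hki, hkj⟩ := Fin.exists_ne_and_ne_of_two_lt i j hd
  have h6 := hμ.integral_pow_six_mul_sq_eq hij hki.symm hkj.symm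
  have hrel : ∀ l, l ≠ i → l ≠ j → ∫ x, (x i) ^ 4 * (x j) ^ 2 * (x l) ^ 2 ∂μ
      = (∫ x, (x i) ^ 4 * (x j) ^ 4 ∂μ) / 3 := fun l hli hlj => by
    linarith [hμ.integral_pow_four_mul_pow_four_eq hij hli.symm hlj.symm]
  have hsum :=
    hμ.integral_eq_sum_integral_mul_sq (f := fun x => (x i) ^ 4 * (x j) ^ 2) (by fun_prop)
  rw [Fintype.sum_eq_add_add_mul_of_forall_ne hij hrel, hμ.integral_pow_four_mul_sq hij,
    Fintype.card_fin] at hsum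
  have e₁ : ∫ x, (x i) ^ 4 * (x j) ^ 2 * (x i) ^ 2 ∂μ = ∫ x, (x i) ^ 6 * (x j) ^ 2 ∂μ := by
    congr 1; ext x; ring
  have e₂ : ∫ x, (x i) ^ 4 * (x j) ^ 2 * (x j) ^ 2 ∂μ = ∫ x, (x i) ^ 4 * (x j) ^ 4 ∂μ := by
    congr 1; ext x; ring
  rw [e₁, e₂] at hsum
  have hd₀ : (0 : ℝ) < d := by positivity
  rw [eq_div_iff (by positivity)]
  field_simp at hsum
  linear_combination -hsum - (d * (d + 2) * (d + 4) : ℝ) * h6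

lemma integral_pow_six_mul_sq {i j : Fin d} (hij : i ≠ j) (hd : 3 ≤ d) :
    ∫ x, (x i) ^ 6 * (x j) ^ 2 ∂μ = 15 / (d * (d + 2) * (d + 4) * (d + 6)) := by
  obtain ⟨k, hki, hkj⟩ := Fin.exists_ne_and_ne_of_two_lt i j hd
  have h6 := hμ.integral_pow_six_mul_sq_eq hij hki.symm hkj.symm
  rw [hμ.integral_pow_four_mul_pow_four hij hd] at h6
  linear_combination h6 / 3

lemma integral_pow_four_mul_sq_mul_sq {i j k : Fin d} (hij : i ≠ j) (hik : i ≠ k)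
    (hjk : j ≠ k) :
    ∫ x, (x i) ^ 4 * (x j) ^ 2 * (x k) ^ 2 ∂μ = 3 / (d * (d + 2) * (d + 4) * (d + 6)) := by
  have h4 := hμ.integral_pow_four_mul_pow_four_eq hij hik hjk
  rw [hμ.integral_pow_four_mul_pow_four hij 
    (by simpa using Fintype.two_lt_card_iff.2 ⟨i, j, k, hij, hik, hjk⟩ : 2 < d)] at h4
  linear_combination -h4 / 3

lemma integral_pow_eight (i : Fin d) (hd : 3 ≤ d) :
    ∫ x, (x i) ^ 8 ∂μ = 105 / (d * (d + 2) * (d + 4) * (d + 6)) := by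
  obtain ⟨j, hji, -⟩ := Fin.exists_ne_and_ne_of_two_lt i i hd
  rw [hμ.integral_pow_eight_eq hji.symm, hμ.integral_pow_six_mul_sq hji.symm hd,
    hμ.integral_pow_four_mul_pow_four hji.symm hd]
  ring

lemma integral_sq_mul_sq_mul_sq_mul_sq {i j k l : Fin d} (hij : i ≠ j) (hik : i ≠ k)
    (hil : i ≠ l) (hjk : j ≠ k) (hjl : j ≠ l) (hkl : k ≠ l) :
    ∫ x, (x i) ^ 2 * (x j) ^ 2 * (x k) ^ 2 * (x l) ^ 2 ∂μ
      = 1 / (d * (d + 2) * (d + 4) * (d + 6)) := by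
  have h4 := hμ.integral_pow_four_mul_weight (w := fun x => (x k) ^ 2 * (x l) ^ 2)
    (fun x y h => by simp only [h k hik.symm hjk.symm, h l hil.symm hjl.symm]) hij (by fun_prop)
  simp only [← mul_assoc, hμ.integral_pow_four_mul_sq_mul_sq hik hil hkl] at h4
  linear_combination -h4 / 3

lemma integral_sq_mul_sq_eq_gaussSqMoment₂ (i j : Fin d) :
    ∫ x, (x i) ^ 2 * (x j) ^ 2 ∂μ = gaussSqMoment₂ i j / (d * (d + 2)) := by
  rcases eq_or_ne j i with rfl | hji
  · rw [(integral_congr_ae (.of_forall fun x => by ring)).trans (hμ.integral_pow_four j)]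
    norm_num [gaussSqMoment₂]
  · rw [hμ.integral_sq_mul_sq hji.symm]
    simp [gaussSqMoment₂, hji]

lemma integral_sq_mul_sq_mul_sq_mul_sq_eq_gaussSqMoment₄_of_eq (hd : 3 ≤ d) {i j : Fin d}
    (hij : i = j) (k l : Fin d) :
    ∫ x, (x i) ^ 2 * (x j) ^ 2 * (x k) ^ 2 * (x l) ^ 2 ∂μ
      = gaussSqMoment₄ i j k l / (d * (d + 2) * (d + 4) * (d + 6)) := by
  subst hij
  rcases eq_or_ne i k with rfl | hik
  · rcases eq_or_ne i l with rfl | hil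
    · rw [(integral_congr_ae (.of_forall fun x => by ring)).trans (hμ.integral_pow_eight i hd)]
      norm_num [gaussSqMoment₄, gaussSqMoment₂]
    · rw [(integral_congr_ae (.of_forall fun x => by ring)).trans
        (hμ.integral_pow_six_mul_sq hil hd)]
      norm_num [gaussSqMoment₄, gaussSqMoment₂, hil, hil.symm]
  rcases eq_or_ne i l with rfl | hil
  · rw [(integral_congr_ae (.of_forall fun x => by ring)).trans
      (hμ.integral_pow_six_mul_sq hik hd)]
    norm_num [gaussSqMoment₄, gaussSqMoment₂, hik, hik.symm]
  rcases eq_or_ne k l with rfl | hkl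
  · rw [(integral_congr_ae (.of_forall fun x => by ring)).trans
      (hμ.integral_pow_four_mul_pow_four hik hd)]
    norm_num [gaussSqMoment₄, gaussSqMoment₂, hik, hik.symm]
  · rw [(integral_congr_ae (.of_forall fun x => by ring)).trans
      (hμ.integral_pow_four_mul_sq_mul_sq hik hil hkl)]
    norm_num [gaussSqMoment₄, gaussSqMoment₂, hik, hik.symm, hil, hil.symm, hkl, hkl.symm]

lemma integral_sq_mul_sq_mul_sq_mul_sq_eq_gaussSqMoment₄_of_eq_or_eq (hd : 3 ≤ d) {i j k : Fin d}
    (hij : i ≠ j) (hk : i = k ∨ j = k) (l : Fin d) :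
    ∫ x, (x i) ^ 2 * (x j) ^ 2 * (x k) ^ 2 * (x l) ^ 2 ∂μ
      = gaussSqMoment₄ i j k l / (d * (d + 2) * (d + 4) * (d + 6)) := by
  rcases hk with rfl | rfl
  · rcases eq_or_ne i l with rfl | hil
    · rw [(integral_congr_ae (.of_forall fun x => by ring)).trans
        (hμ.integral_pow_six_mul_sq hij hd)]
      norm_num [gaussSqMoment₄, gaussSqMoment₂, hij, hij.symm]
    rcases eq_or_ne j l with rfl | hjl
    · rw [(integral_congr_ae (.of_forall fun x => by ring)).trans
        (hμ.integral_pow_four_mul_pow_four hij hd)]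
      norm_num [gaussSqMoment₄, gaussSqMoment₂, hij, hij.symm]
    · rw [(integral_congr_ae (.of_forall fun x => by ring)).trans
        (hμ.integral_pow_four_mul_sq_mul_sq hij hil hjl)]
      norm_num [gaussSqMoment₄, gaussSqMoment₂, hij, hij.symm, hil, hil.symm, hjl, hjl.symm]
  · rcases eq_or_ne i l with rfl | hil
    · rw [(integral_congr_ae (.of_forall fun x => by ring)).trans
        (hμ.integral_pow_four_mul_pow_four hij hd)]
      norm_num [gaussSqMoment₄, gaussSqMoment₂, hij, hij.symm]
    rcases eq_or_ne j l with rfl | hjl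
    · rw [(integral_congr_ae (.of_forall fun x => by ring)).trans
        (hμ.integral_pow_six_mul_sq hij.symm hd)]
      norm_num [gaussSqMoment₄, gaussSqMoment₂, hij, hij.symm]
    · rw [(integral_congr_ae (.of_forall fun x => by ring)).trans
        (hμ.integral_pow_four_mul_sq_mul_sq hij.symm hjl hil)]
      norm_num [gaussSqMoment₄, gaussSqMoment₂, hij, hij.symm, hil, hil.symm, hjl, hjl.symm]

lemma integral_sq_mul_sq_mul_sq_mul_sq_eq_gaussSqMoment₄ (hd : 3 ≤ d) (i j k l : Fin d) :
    ∫ x, (x i) ^ 2 * (x j) ^ 2 * (x k) ^ 2 * (x l) ^ 2 ∂μ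
      = gaussSqMoment₄ i j k l / (d * (d + 2) * (d + 4) * (d + 6)) := by
  rcases eq_or_ne i j with hij | hij
  · exact hμ.integral_sq_mul_sq_mul_sq_mul_sq_eq_gaussSqMoment₄_of_eq hd hij k l
  by_cases hk : i = k ∨ j = k
  · exact hμ.integral_sq_mul_sq_mul_sq_mul_sq_eq_gaussSqMoment₄_of_eq_or_eq hd hij hk l
  obtain ⟨hik, hjk⟩ : i ≠ k ∧ j ≠ k := not_or.1 hk
  rcases eq_or_ne i l with rfl | hil
  · rw [(integral_congr_ae (.of_forall fun x => by ring)).trans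
      (hμ.integral_pow_four_mul_sq_mul_sq hij hik hjk)]
    norm_num [gaussSqMoment₄, gaussSqMoment₂, hij, hij.symm, hik, hik.symm, hjk, hjk.symm]
  rcases eq_or_ne j l with rfl | hjl
  · rw [(integral_congr_ae (.of_forall fun x => by ring)).trans
      (hμ.integral_pow_four_mul_sq_mul_sq hij.symm hjk hik)]
    norm_num [gaussSqMoment₄, gaussSqMoment₂, hij, hij.symm, hik, hik.symm, hjk, hjk.symm, hil,
      hil.symm]
  rcases eq_or_ne k l with rfl | hkl
  · rw [(integral_congr_ae (.of_forall fun x => by ring)).trans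
      (hμ.integral_pow_four_mul_sq_mul_sq hik.symm hjk.symm hij)]
    norm_num [gaussSqMoment₄, gaussSqMoment₂, hij, hij.symm, hik, hik.symm, hjk, hjk.symm, hil,
      hil.symm, hjl, hjl.symm]
  · rw [hμ.integral_sq_mul_sq_mul_sq_mul_sq hij hik hil hjk hjl hkl]
    norm_num [gaussSqMoment₄, gaussSqMoment₂, hij, hij.symm, hik, hik.symm, hjk, hjk.symm, hil,
      hil.symm, hjl, hjl.symm, hkl, hkl.symm]

lemma integral_sum_mul_sq_pow_two (c : Fin d → ℝ) :
    ∫ x, (∑ n, c n * (x n) ^ 2) ^ 2 ∂μ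
      = ∑ i, ∑ j, c i * c j * ∫ x, (x i) ^ 2 * (x j) ^ 2 ∂μ := by
  have expand : ∀ x : EuclideanSpace ℝ (Fin d), (∑ n, c n * (x n) ^ 2) ^ 2
      = ∑ i, ∑ j, c i * c j * ((x i) ^ 2 * (x j) ^ 2) := fun x => by
    simp only [sq (∑ n, _), Finset.sum_mul, Finset.mul_sum]
    exact Finset.sum_congr rfl fun _ _ => Finset.sum_congr rfl fun _ _ => by ring
  simp (disch := first
    | exact hμ.integrable (by fun_prop)
    | exact fun _ _ => hμ.integrable (by fun_prop)) only [expand, integral_finsetSum,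
      integral_const_mul]

lemma integral_sum_mul_sq_pow_four (c : Fin d → ℝ) :
    ∫ x, (∑ n, c n * (x n) ^ 2) ^ 4 ∂μ = ∑ i, ∑ j, ∑ k, ∑ l,
      c i * c j * c k * c l * ∫ x, (x i) ^ 2 * (x j) ^ 2 * (x k) ^ 2 * (x l) ^ 2 ∂μ := by
  have expand : ∀ x : EuclideanSpace ℝ (Fin d), (∑ n, c n * (x n) ^ 2) ^ 4
      = ∑ i, ∑ j, ∑ k, ∑ l,
          c i * c j * c k * c l * ((x i) ^ 2 * (x j) ^ 2 * (x k) ^ 2 * (x l) ^ 2) :=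
    fun x => by
      simp only [pow_succ, pow_zero, one_mul, Finset.sum_mul, Finset.mul_sum]
      exact Finset.sum_congr rfl fun _ _ => Finset.sum_congr rfl fun _ _ =>
        Finset.sum_congr rfl fun _ _ => Finset.sum_congr rfl fun _ _ => by ring
  simp (disch := first
    | exact hμ.integrable (by fun_prop)
    | exact fun _ _ => hμ.integrable (by fun_prop)) only [expand, integral_finsetSum,
      integral_const_mul]

lemma integral_sum_mul_sq (a : Fin d → ℝ) :
    ∫ x, ∑ j, a j * (x j) ^ 2 ∂μ = (∑ j, a j) / d := by
  simp (disch := exact fun _ _ => hμ.integrable (by fun_prop)) only [integral_finsetSum,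
    integral_const_mul, hμ.integral_sq, Finset.sum_div, mul_one_div]

lemma ae_sum_mul_sq_sub_integral (a : Fin d → ℝ) :
    ∀ᵐ x ∂μ, ∑ j, a j * (x j) ^ 2 - ∫ y, ∑ j, a j * (y j) ^ 2 ∂μ
      = ∑ j, (a j - (∑ n, a n) / d) * (x j) ^ 2 := by
  filter_upwards [hμ.ae_sum_sq_eq_one] with x hx
  simp only [sub_mul, Finset.sum_sub_distrib, ← Finset.mul_sum, hx, hμ.integral_sum_mul_sq,
    mul_one]

variable {c : Fin d → ℝ} (hc : ∑ n, c n = 0)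
include hc

lemma integral_sum_mul_sq_pow_two_of_sum_eq_zero :
    ∫ x, (∑ n, c n * (x n) ^ 2) ^ 2 ∂μ = 2 * (∑ n, (c n) ^ 2) / (d * (d + 2)) := by
  simp only [hμ.integral_sum_mul_sq_pow_two, hμ.integral_sq_mul_sq_eq_gaussSqMoment₂, mul_div,
    ← Finset.sum_div, sum_mul_gaussSqMoment₂ hc]

lemma integral_sum_mul_sq_pow_four_of_sum_eq_zero (hd : 3 ≤ d) :
    ∫ x, (∑ n, c n * (x n) ^ 2) ^ 4 ∂μ
      = (12 * (∑ n, (c n) ^ 2) ^ 2 + 48 * ∑ n, (c n) ^ 4)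
          / (d * (d + 2) * (d + 4) * (d + 6)) := by
  simp only [hμ.integral_sum_mul_sq_pow_four,
    hμ.integral_sq_mul_sq_mul_sq_mul_sq_eq_gaussSqMoment₄ hd, mul_div, ← Finset.sum_div,
    sum_mul_gaussSqMoment₄ hc]

lemma integral_sum_mul_sq_pow_four_le_of_sum_eq_zero_of_three_le (hd : 3 ≤ d) :
    ∫ x, (∑ n, c n * (x n) ^ 2) ^ 4 ∂μ ≤ 15 * (∫ x, (∑ n, c n * (x n) ^ 2) ^ 2 ∂μ) ^ 2 := by
  rw [hμ.integral_sum_mul_sq_pow_four_of_sum_eq_zero hc hd,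
    hμ.integral_sum_mul_sq_pow_two_of_sum_eq_zero hc]
  set A := ∑ n, (c n) ^ 2
  have hA : 0 ≤ A := Finset.sum_nonneg fun n _ => sq_nonneg _
  have hB : ∑ n, (c n) ^ 4 ≤ A ^ 2 := by
    simpa only [← pow_mul] using Finset.sum_sq_le_sq_sum_of_nonneg fun n _ => sq_nonneg (c n)
  have hd₀ : (0 : ℝ) < d := by positivity
  calc (12 * A ^ 2 + 48 * ∑ n, (c n) ^ 4) / (d * (d + 2) * (d + 4) * (d + 6))
      ≤ 60 * A ^ 2 / (d * (d + 2) * (d + 4) * (d + 6)) := by gcongr; linarith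
    _ ≤ 60 * A ^ 2 / (d * (d + 2)) ^ 2 := by
      refine div_le_div_of_nonneg_left (by positivity) (by positivity) ?_
      have : (0 : ℝ) ≤ d * (d + 2) := by positivity
      nlinarith
    _ = 15 * (2 * A / (d * (d + 2))) ^ 2 := by field_simp; ring

end

section

variable {μ : Measure (EuclideanSpace ℝ (Fin 2))} [IsProbabilityMeasure μ]
  (hμ : IsUniformOnSphere μ)
include hμ

lemma integral_sum_mul_sq_pow_four_le_of_sum_eq_zero_fin_two {c : Fin 2 → ℝ} (hc : ∑ n, c n = 0) :
    ∫ x, (∑ n, c n * (x n) ^ 2) ^ 4 ∂μ ≤ 15 * (∫ x, (∑ n, c n * (x n) ^ 2) ^ 2 ∂μ) ^ 2 := by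
  have hc₁ : c 1 = -c 0 := by rw [Fin.sum_univ_two] at hc; linarith
  have hbound : ∀ᵐ x ∂μ, (∑ n, c n * (x n) ^ 2) ^ 2 ≤ (∑ n, (c n) ^ 2) / 2 := by
    filter_upwards [hμ.ae_sum_sq_eq_one] with x hx
    simp only [Fin.sum_univ_two, hc₁] at hx ⊢
    have hx₂ : ((x 0) ^ 2 + (x 1) ^ 2) ^ 2 = 1 := by rw [hx, one_pow]
    nlinarith [mul_nonneg (sq_nonneg (c 0)) (mul_nonneg (sq_nonneg (x 0)) (sq_nonneg (x 1)))]
  have h₄ := integral_pow_four_le_mul_integral_sq (hμ.integrable (by fun_prop))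
    (hμ.integrable (by fun_prop)) hbound
  have hA : 0 ≤ ∑ n, (c n) ^ 2 := Finset.sum_nonneg fun n _ => sq_nonneg _
  rw [hμ.integral_sum_mul_sq_pow_two_of_sum_eq_zero hc] at h₄ ⊢
  norm_num at h₄ ⊢
  nlinarith

end

section

variable {μ : Measure (EuclideanSpace ℝ (Fin d))} [IsProbabilityMeasure μ]
  (hμ : IsUniformOnSphere μ)
include hμ

lemma integral_sum_mul_sq_pow_four_le_of_sum_eq_zero {c : Fin d → ℝ} (hc : ∑ n, c n = 0) :
    ∫ x, (∑ n, c n * (x n) ^ 2) ^ 4 ∂μ ≤ 15 * (∫ x, (∑ n, c n * (x n) ^ 2) ^ 2 ∂μ) ^ 2 := by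
  rcases le_or_gt d 1 with hd | hd
  · have : Subsingleton (Fin d) := Fin.subsingleton_iff_le_one.2 hd
    have hc₀ : ∀ j, c j = 0 := fun j => by rwa [Fintype.sum_subsingleton _ j] at hc
    simp [hc₀]
  rcases eq_or_lt_of_le (Nat.succ_le_of_lt hd) with hd | hd
  · subst hd
    exact hμ.integral_sum_mul_sq_pow_four_le_of_sum_eq_zero_fin_two hc
  · exact hμ.integral_sum_mul_sq_pow_four_le_of_sum_eq_zero_of_three_le hc hd

theorem integral_sub_integral_pow_four_le (a : Fin d → ℝ) :
    ∫ x, (∑ j, a j * (x j) ^ 2 - ∫ y, ∑ j, a j * (y j) ^ 2 ∂μ) ^ 4 ∂μ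
      ≤ 15 * (∫ x, (∑ j, a j * (x j) ^ 2 - ∫ y, ∑ j, a j * (y j) ^ 2 ∂μ) ^ 2 ∂μ) ^ 2 := by
  have hcentered : ∀ k : ℕ, ∫ x, (∑ j, a j * (x j) ^ 2 - ∫ y, ∑ j, a j * (y j) ^ 2 ∂μ) ^ k ∂μ
      = ∫ x, (∑ j, (a j - (∑ n, a n) / d) * (x j) ^ 2) ^ k ∂μ := fun k =>
    integral_congr_ae ((hμ.ae_sum_mul_sq_sub_integral a).mono fun x hx => by simp only [hx])
  have hc := Fintype.sum_sub_mean_eq_zero a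
  rw [Fintype.card_fin] at hc
  rw [hcentered, hcentered]
  exact hμ.integral_sum_mul_sq_pow_four_le_of_sum_eq_zero hc

end

end IsUniformOnSphere

lemma isUniformOnSphere_map {Ω : Type*} [MeasurableSpace Ω] {P : Measure Ω}
    {θ : Ω → EuclideanSpace ℝ (Fin d)} (hmeas : Measurable θ) (hsphere : ∀ᵐ ω ∂P, ‖θ ω‖ = 1)
    (hrot : ∀ O : EuclideanSpace ℝ (Fin d) ≃ₗᵢ[ℝ] EuclideanSpace ℝ (Fin d),
      P.map (fun ω => O (θ ω)) = P.map θ) :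
    IsUniformOnSphere (P.map θ) where
  ae_norm_eq_one := (ae_map_iff hmeas.aemeasurable
    (isClosed_eq continuous_norm continuous_const).measurableSet).2 hsphere
  map_eq O := by rw [Measure.map_map O.continuous.measurable hmeas]; exact hrot O

theorem stmt2_general {Ω : Type*} [MeasureSpace Ω] [IsProbabilityMeasure (ℙ : Measure Ω)]
    (d : ℕ)
    (θ : Ω → EuclideanSpace ℝ (Fin d)) (hmeas : Measurable θ)
    (hsphere : ∀ᵐ ω ∂ℙ, ‖θ ω‖ = 1)
    (hrot : ∀ O : EuclideanSpace ℝ (Fin d) ≃ₗᵢ[ℝ] EuclideanSpace ℝ (Fin d),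
      Measure.map (fun ω => O (θ ω)) ℙ = Measure.map θ ℙ)
    (a : Fin d → ℝ)
    (X : Ω → ℝ) (hX : X = fun ω => ∑ j, a j * (θ ω j) ^ 2) :
    ∫ ω, (X ω - ∫ ω', X ω') ^ 4 ≤ 15 * (∫ ω, (X ω - ∫ ω', X ω') ^ 2) ^ 2 := by
  have hμ := isUniformOnSphere_map hmeas hsphere hrot
  have : IsProbabilityMeasure (Measure.map θ ℙ) :=
    Measure.isProbabilityMeasure_map hmeas.aemeasurable
  have hpull : ∀ g : EuclideanSpace ℝ (Fin d) → ℝ, Continuous g →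
      ∫ ω, g (θ ω) = ∫ x, g x ∂(Measure.map θ ℙ) := fun g hg =>
    (integral_map hmeas.aemeasurable hg.aestronglyMeasurable).symm
  subst hX
  beta_reduce
  have hmean := hpull (fun x => ∑ j, a j * (x j) ^ 2) (by fun_prop)
  have hcentral := fun k : ℕ => hpull
    (fun x => (∑ j, a j * (x j) ^ 2 - ∫ y, ∑ j, a j * (y j) ^ 2 ∂(Measure.map θ ℙ)) ^ k)
    (by fun_prop)
  beta_reduce at hmean hcentral
  rw [hmean, hcentral, hcentral]
  exact hμ.integral_sub_integral_pow_four_le a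

/-- If `θ` is uniform on the unit sphere `S^{d-1} ⊆ ℝ^d` (characterised as a random vector
lying a.s. on the sphere whose law is rotation invariant) and `a₁, …, a_d ≥ 0`, then
`X = Σⱼ aⱼ θⱼ²` satisfies `E (X - E X)⁴ ≤ 15 (E (X - E X)²)²`. -/
theorem stmt2 {Ω : Type*} [MeasureSpace Ω] [IsProbabilityMeasure (ℙ : Measure Ω)]
    (d : ℕ) (hd : 1 ≤ d)
    (θ : Ω → EuclideanSpace ℝ (Fin d)) (hmeas : Measurable θ)
    (hsphere : ∀ᵐ ω ∂ℙ, ‖θ ω‖ = 1)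
    (hrot : ∀ O : EuclideanSpace ℝ (Fin d) ≃ₗᵢ[ℝ] EuclideanSpace ℝ (Fin d),
      Measure.map (fun ω => O (θ ω)) ℙ = Measure.map θ ℙ)
    (a : Fin d → ℝ) (ha : ∀ j, 0 ≤ a j)
    (X : Ω → ℝ) (hX : X = fun ω => ∑ j, a j * (θ ω j) ^ 2) :
    ∫ ω, (X ω - ∫ ω', X ω') ^ 4 ≤ 15 * (∫ ω, (X ω - ∫ ω', X ω') ^ 2) ^ 2 :=
  stmt2_general d θ hmeas hsphere hrot a X hX
end

section
/- Let g₁, …, gₙ be independent standard Gaussian random variables and λ₁, …, λₙ ≥ 0, not all zero. Then P(Σₖ λₖgₖ² > Σₖ λₖ) ≥ 1/(15·2^{4/3}). -/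
/-!
Put `Yₖ = λₖ (gₖ² - 1)` and `X = Σ Yₖ`, so that the event is `{X > 0}`. The `Yₖ` are independent
and centred with `𝔼 Yₖ⁴ = 60 λₖ⁴ = 15 (𝔼 Yₖ²)²`, and since
`𝔼 (A + B)⁴ = 𝔼 A⁴ + 6 𝔼 A² 𝔼 B² + 𝔼 B⁴` for independent centred `A`, `B`, the kurtosis bound
`𝔼 X⁴ ≤ 15 (𝔼 X²)²` passes to the sum. For a centred `X` with `p = P(X > 0)`, Hölder's inequality
gives `(𝔼 X²)³ ≤ (𝔼 |X|)² 𝔼 X⁴` and `𝔼 |X| = 2 𝔼[X; X > 0] ≤ 2 (𝔼 X⁴)^{1/4} p^{3/4}`, hence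
`(𝔼 X²)⁶ ≤ 16 (𝔼 X⁴)³ p³ ≤ 16 · 15³ (𝔼 X²)⁶ p³`.
-/

open MeasureTheory ProbabilityTheory Finset
open scoped ENNReal Nat

lemma pow_le_pow_mul_pow_of_le_rpow_mul_rpow {x a b : ℝ} {n i j : ℕ} (hx : 0 ≤ x) (ha : 0 ≤ a)
    (hb : 0 ≤ b) (hn : n ≠ 0) (h : x ≤ a ^ ((i : ℝ) / n) * b ^ ((j : ℝ) / n)) :
    x ^ n ≤ a ^ i * b ^ j := by
  calc x ^ n ≤ (a ^ ((i : ℝ) / n) * b ^ ((j : ℝ) / n)) ^ n := pow_le_pow_left₀ hx h n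
    _ = a ^ i * b ^ j := by
      rw [mul_pow, ← Real.rpow_mul_natCast ha, ← Real.rpow_mul_natCast hb,
        div_mul_cancel₀ _ (Nat.cast_ne_zero.2 hn), div_mul_cancel₀ _ (Nat.cast_ne_zero.2 hn),
        Real.rpow_natCast, Real.rpow_natCast]

namespace ProbabilityTheory

section MomentBounds

variable {Ω : Type*} [MeasurableSpace Ω] {μ : Measure Ω} {X : Ω → ℝ}

lemma integral_abs_eq_two_mul_setIntegral_pos (hXm : Measurable X) (hX : Integrable X μ)
    (hX0 : ∫ ω, X ω ∂μ = 0) : ∫ ω, |X ω| ∂μ = 2 * ∫ ω in {ω | 0 < X ω}, X ω ∂μ := by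
  have hs : MeasurableSet {ω | 0 < X ω} := measurableSet_lt measurable_const hXm
  have hpos : ∫ ω in {ω | 0 < X ω}, |X ω| ∂μ = ∫ ω in {ω | 0 < X ω}, X ω ∂μ :=
    setIntegral_congr_fun hs fun ω hω => abs_of_pos hω
  have hneg : ∫ ω in {ω | 0 < X ω}ᶜ, |X ω| ∂μ = -∫ ω in {ω | 0 < X ω}ᶜ, X ω ∂μ := by
    rw [← integral_neg]
    exact setIntegral_congr_fun hs.compl fun ω hω => abs_of_nonpos (not_lt.mp hω)
  have hsplit := integral_add_compl hs hX
  rw [← integral_add_compl hs hX.abs, hpos, hneg]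
  linarith

variable [IsFiniteMeasure μ]

lemma _root_.MeasureTheory.MemLp.integrable_pow_of_le {f : Ω → ℝ} {n m : ℕ}
    (hf : MemLp f n μ) (hmn : m ≤ n) : Integrable (fun ω => f ω ^ m) μ :=
  (hf.mono_exponent (by exact_mod_cast hmn)).integrable_norm_pow'.mono' (hf.1.pow m) (by simp)

lemma setIntegral_abs_pow_four_le (hX : MemLp X 4 μ) (s : Set Ω) :
    (∫ ω in s, |X ω| ∂μ) ^ 4 ≤ (∫ ω, X ω ^ 4 ∂μ) * μ.real s ^ 3 := by
  have hX4 : MemLp (fun ω => |X ω|) (ENNReal.ofReal 4) (μ.restrict s) := by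
    simpa using hX.norm.restrict s
  have holder := integral_mul_le_Lp_mul_Lq_of_nonneg (p := 4) (q := 4 / 3) (f := fun ω => |X ω|)
    (g := fun _ => (1 : ℝ)) ⟨by norm_num, by norm_num, by norm_num⟩
    (ae_of_all _ fun ω => abs_nonneg _) (ae_of_all _ fun _ => zero_le_one) hX4 (memLp_const 1)
  have hle : ∫ ω in s, |X ω| ^ 4 ∂μ ≤ ∫ ω, X ω ^ 4 ∂μ := by
    simp_rw [Even.pow_abs (by decide : Even 4)]
    exact setIntegral_le_integral (hX.integrable_pow_of_le le_rfl)
      (ae_of_all _ fun ω => (by positivity : 0 ≤ X ω ^ 4))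
  simp only [mul_one, Real.one_rpow, integral_const, smul_eq_mul, measureReal_restrict_apply_univ]
    at holder
  have key : ∫ ω in s, |X ω| ∂μ
      ≤ (∫ ω, X ω ^ 4 ∂μ) ^ ((1 : ℕ) / (4 : ℕ) : ℝ) * μ.real s ^ ((3 : ℕ) / (4 : ℕ) : ℝ) :=
    holder.trans (by norm_num; gcongr)
  simpa using pow_le_pow_mul_pow_of_le_rpow_mul_rpow (integral_nonneg fun _ => abs_nonneg _)
    (integral_nonneg fun ω => (by positivity : 0 ≤ X ω ^ 4)) measureReal_nonneg four_ne_zero key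

lemma integral_sq_pow_three_le (hX : MemLp X 4 μ) :
    (∫ ω, X ω ^ 2 ∂μ) ^ 3 ≤ (∫ ω, |X ω| ∂μ) ^ 2 * ∫ ω, X ω ^ 4 ∂μ := by
  have hf : MemLp (fun ω => |X ω| ^ (2 / 3 : ℝ)) (ENNReal.ofReal (3 / 2)) μ := by
    convert (hX.mono_exponent (by norm_num : (1 : ℝ≥0∞) ≤ 4)).norm_rpow_div (ENNReal.ofReal (2 / 3))
      using 1
    · rw [ENNReal.toReal_ofReal (by norm_num)]; rfl
    · rw [← ENNReal.ofReal_one, ← ENNReal.ofReal_div_of_pos (by norm_num)]; norm_num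
  have hg : MemLp (fun ω => |X ω| ^ (4 / 3 : ℝ)) (ENNReal.ofReal 3) μ := by
    convert hX.norm_rpow_div (ENNReal.ofReal (4 / 3)) using 1
    · rw [ENNReal.toReal_ofReal (by norm_num)]; rfl
    · rw [← ENNReal.ofReal_ofNat 4, ← ENNReal.ofReal_div_of_pos (by norm_num)]; norm_num
  have holder := integral_mul_le_Lp_mul_Lq_of_nonneg ⟨by norm_num, by norm_num, by norm_num⟩
    (ae_of_all _ fun ω => by positivity) (ae_of_all _ fun ω => by positivity) hf hg
  have hfg (ω : Ω) : |X ω| ^ (2 / 3 : ℝ) * |X ω| ^ (4 / 3 : ℝ) = X ω ^ 2 := by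
    rw [← Real.rpow_add' (abs_nonneg _) (by norm_num)]; norm_num
  have hf' (ω : Ω) : (|X ω| ^ (2 / 3 : ℝ)) ^ (3 / 2 : ℝ) = |X ω| := by
    rw [← Real.rpow_mul (abs_nonneg _)]; norm_num
  have hg' (ω : Ω) : (|X ω| ^ (4 / 3 : ℝ)) ^ (3 : ℝ) = X ω ^ 4 := by
    rw [← Real.rpow_mul (abs_nonneg _)]; norm_num [Even.pow_abs (by decide : Even 4)]
  simp only [hfg, hf', hg'] at holder
  have key : ∫ ω, X ω ^ 2 ∂μ
      ≤ (∫ ω, |X ω| ∂μ) ^ ((2 : ℕ) / (3 : ℕ) : ℝ) * (∫ ω, X ω ^ 4 ∂μ) ^ ((1 : ℕ) / (3 : ℕ) : ℝ) :=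
    holder.trans_eq (by norm_num)
  simpa using pow_le_pow_mul_pow_of_le_rpow_mul_rpow
    (integral_nonneg fun ω => (by positivity : 0 ≤ X ω ^ 2)) (integral_nonneg fun _ => abs_nonneg _)
    (integral_nonneg fun ω => (by positivity : 0 ≤ X ω ^ 4)) three_ne_zero key

lemma one_div_le_measureReal_pos_of_integral_pow_four_le (hXm : Measurable X) (hX : MemLp X 4 μ)
    (hX0 : ∫ ω, X ω ∂μ = 0) (hvar : 0 < ∫ ω, X ω ^ 2 ∂μ) {C : ℝ}
    (hC : ∫ ω, X ω ^ 4 ∂μ ≤ C * (∫ ω, X ω ^ 2 ∂μ) ^ 2) :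
    1 / (C * (2 : ℝ) ^ ((4 : ℝ) / 3)) ≤ μ.real {ω | 0 < X ω} := by
  set s := {ω | 0 < X ω}
  set v := ∫ ω, X ω ^ 2 ∂μ
  set M := ∫ ω, X ω ^ 4 ∂μ
  set m := ∫ ω in s, |X ω| ∂μ
  have hM : 0 ≤ M := integral_nonneg fun ω => (by positivity : 0 ≤ X ω ^ 4)
  have hm : 0 ≤ m := integral_nonneg fun _ => abs_nonneg _
  have habs : ∫ ω, |X ω| ∂μ = 2 * m := by
    rw [integral_abs_eq_two_mul_setIntegral_pos hXm (hX.integrable (by norm_num)) hX0]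
    congr 1
    exact setIntegral_congr_fun (measurableSet_lt measurable_const hXm) fun ω hω => (abs_of_pos hω).symm
  have h1 : v ^ 3 ≤ (2 * m) ^ 2 * M := habs ▸ integral_sq_pow_three_le hX
  have h2 : m ^ 4 ≤ M * μ.real s ^ 3 := setIntegral_abs_pow_four_le hX s
  have hC0 : 0 ≤ C := nonneg_of_mul_nonneg_left (hM.trans hC) (by positivity)
  have h16 : v ^ 6 * 1 ≤ v ^ 6 * (C * (2 : ℝ) ^ ((4 : ℝ) / 3) * μ.real s) ^ 3 := by
    have h23 : ((2 : ℝ) ^ ((4 : ℝ) / 3)) ^ 3 = 16 := by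
      rw [← Real.rpow_natCast, ← Real.rpow_mul (by norm_num)]; norm_num
    calc v ^ 6 * 1 = (v ^ 3) ^ 2 := by ring
      _ ≤ ((2 * m) ^ 2 * M) ^ 2 := pow_le_pow_left₀ (by positivity) h1 2
      _ = 16 * m ^ 4 * M ^ 2 := by ring
      _ ≤ 16 * (M * μ.real s ^ 3) * M ^ 2 := by gcongr
      _ = 16 * M ^ 3 * μ.real s ^ 3 := by ring
      _ ≤ 16 * (C * v ^ 2) ^ 3 * μ.real s ^ 3 := by gcongr
      _ = _ := by simp only [mul_pow, h23]; ring
  have h1le : 1 ≤ C * (2 : ℝ) ^ ((4 : ℝ) / 3) * μ.real s :=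
    (one_le_pow_iff_of_nonneg (by positivity) three_ne_zero).1
      (le_of_mul_le_mul_left h16 (by positivity))
  have hpos : 0 < C * (2 : ℝ) ^ ((4 : ℝ) / 3) := by
    by_contra! h
    nlinarith [mul_nonpos_of_nonpos_of_nonneg h (measureReal_nonneg (μ := μ) (s := s))]
  rw [div_le_iff₀ hpos]
  linarith

end MomentBounds

section Independence

variable {Ω : Type*} [MeasurableSpace Ω] {μ : Measure Ω} [IsProbabilityMeasure μ]

lemma IndepFun.integral_add_pow_s3 {A B : Ω → ℝ} {n : ℕ} (hAB : IndepFun A B μ)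
    (hA : MemLp A n μ) (hB : MemLp B n μ) :
    ∫ ω, (A ω + B ω) ^ n ∂μ
      = ∑ m ∈ range (n + 1), (∫ ω, A ω ^ m ∂μ) * (∫ ω, B ω ^ (n - m) ∂μ) * n.choose m := by
  have hpow (m : ℕ) : IndepFun (fun ω => A ω ^ m) (fun ω => B ω ^ (n - m)) μ :=
    hAB.comp (measurable_id.pow_const m) (measurable_id.pow_const (n - m))
  simp_rw [add_pow]
  rw [integral_finsetSum]
  · refine sum_congr rfl fun m _ => ?_
    rw [integral_mul_const, (hpow m).integral_fun_mul_eq_mul_integral (hA.1.pow m) (hB.1.pow _)]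
  · intro m hm
    exact ((hpow m).integrable_mul (hA.integrable_pow_of_le (by simpa [Nat.lt_succ_iff] using hm))
      (hB.integrable_pow_of_le (Nat.sub_le n m))).mul_const _

lemma IndepFun.integral_add_pow_four {A B : Ω → ℝ} (hAB : IndepFun A B μ)
    (hA : MemLp A 4 μ) (hB : MemLp B 4 μ) (hA0 : ∫ ω, A ω ∂μ = 0) (hB0 : ∫ ω, B ω ∂μ = 0) :
    ∫ ω, (A ω + B ω) ^ 4 ∂μ
      = ∫ ω, A ω ^ 4 ∂μ + 6 * (∫ ω, A ω ^ 2 ∂μ) * (∫ ω, B ω ^ 2 ∂μ) + ∫ ω, B ω ^ 4 ∂μ := by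
  rw [hAB.integral_add_pow_s3 (by exact_mod_cast hA) (by exact_mod_cast hB)]
  simp [sum_range_succ, hA0, hB0, Nat.choose]
  ring

lemma iIndepFun.integral_sum_sq {ι : Type*} {Y : ι → Ω → ℝ} (hind : iIndepFun Y μ)
    (hY : ∀ i, MemLp (Y i) 2 μ) (hY0 : ∀ i, ∫ ω, Y i ω ∂μ = 0) (s : Finset ι) :
    ∫ ω, (∑ i ∈ s, Y i ω) ^ 2 ∂μ = ∑ i ∈ s, ∫ ω, Y i ω ^ 2 ∂μ := by
  have h := IndepFun.variance_sum (s := s) (fun i _ => hY i) fun i _ j _ hij => hind.indepFun hij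
  rw [variance_of_integral_eq_zero (memLp_finsetSum' s fun i _ => hY i).aemeasurable
    (by simp [integral_finsetSum _ fun i _ => (hY i).integrable one_le_two, hY0])] at h
  simpa [variance_of_integral_eq_zero (hY _).aemeasurable (hY0 _)] using h

lemma iIndepFun.integral_sum_pow_four_le {ι : Type*} {Y : ι → Ω → ℝ} (hind : iIndepFun Y μ)
    (hmeas : ∀ i, Measurable (Y i)) (hY : ∀ i, MemLp (Y i) 4 μ) (hY0 : ∀ i, ∫ ω, Y i ω ∂μ = 0)
    {C : ℝ} (hC : 3 ≤ C) (h4 : ∀ i, ∫ ω, Y i ω ^ 4 ∂μ ≤ C * (∫ ω, Y i ω ^ 2 ∂μ) ^ 2)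
    (s : Finset ι) :
    ∫ ω, (∑ i ∈ s, Y i ω) ^ 4 ∂μ ≤ C * (∑ i ∈ s, ∫ ω, Y i ω ^ 2 ∂μ) ^ 2 := by
  classical
  induction s using Finset.induction_on with
  | empty => simp
  | insert i s hi ih =>
    have hind' : IndepFun (fun ω => ∑ j ∈ s, Y j ω) (Y i) μ := by
      simpa [Finset.sum_fn] using hind.indepFun_finsetSum_of_notMem hmeas hi
    have hY2 (j : ι) : MemLp (Y j) 2 μ := (hY j).mono_exponent (by norm_num)
    have hvar := hind.integral_sum_sq hY2 hY0 s
    have hA0 : ∫ ω, ∑ j ∈ s, Y j ω ∂μ = 0 := by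
      simp [integral_finsetSum _ fun j _ => (hY j).integrable (by norm_num), hY0]
    have hnonneg (j : ι) : 0 ≤ ∫ ω, Y j ω ^ 2 ∂μ := integral_nonneg fun ω => sq_nonneg _
    simp only [sum_insert hi, add_comm (Y i _)]
    rw [hind'.integral_add_pow_four (memLp_finsetSum s fun j _ => hY j) (hY i) hA0 (hY0 i), hvar]
    -- `C a² + 6 a b + C b² ≤ C (a + b)²` because `6 ≤ 2 C`
    have hcross := mul_nonneg (mul_nonneg (sub_nonneg.2 hC) (hnonneg i))
      (sum_nonneg fun j (_ : j ∈ s) => hnonneg j)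
    nlinarith [h4 i]

end Independence

section Gaussian

lemma integrable_pow_gaussianReal (k : ℕ) : Integrable (fun x : ℝ => x ^ k) (gaussianReal 0 1) :=
  (memLp_id_gaussianReal k).integrable_pow_of_le le_rfl

lemma hasDerivAt_gaussianPDFReal_zero_one (x : ℝ) :
    HasDerivAt (gaussianPDFReal 0 1) (-x * gaussianPDFReal 0 1 x) x := by
  rw [gaussianPDFReal_def]
  refine ((((hasDerivAt_id x).sub_const 0).pow 2).neg.div_const _).exp.const_mul _
    |>.congr_deriv ?_
  simp
  ring

lemma integrable_gaussianPDFReal_mul_pow (k : ℕ) :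
    Integrable (fun x => gaussianPDFReal 0 1 x * x ^ k) := by
  have h := integrable_pow_gaussianReal k
  rw [gaussianReal_of_var_ne_zero _ one_ne_zero, gaussianPDF_def,
    integrable_withDensity_iff_integrable_smul' (by fun_prop) (by simp)] at h
  simpa [ENNReal.toReal_ofReal (gaussianPDFReal_nonneg _ _ _)] using h

lemma integral_pow_add_two_gaussianReal (n : ℕ) :
    ∫ x, x ^ (n + 2) ∂gaussianReal 0 1 = (n + 1) * ∫ x, x ^ n ∂gaussianReal 0 1 := by
  simp only [integral_gaussianReal_eq_integral_smul one_ne_zero, smul_eq_mul]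
  -- Stein's identity: the derivative of `x ^ (n + 1) φ(x)` integrates to zero, and `φ' = -x φ`.
  have hderiv (x : ℝ) : HasDerivAt (fun y => y ^ (n + 1) * gaussianPDFReal 0 1 y)
      ((n + 1) * (gaussianPDFReal 0 1 x * x ^ n) - gaussianPDFReal 0 1 x * x ^ (n + 2)) x := by
    refine ((hasDerivAt_pow (n + 1) x).mul (hasDerivAt_gaussianPDFReal_zero_one x)).congr_deriv ?_
    push_cast
    ring
  have h := integral_eq_zero_of_hasDerivAt_of_integrable hderiv
    (((integrable_gaussianPDFReal_mul_pow n).const_mul _).sub (integrable_gaussianPDFReal_mul_pow _))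
    (by simpa only [mul_comm] using integrable_gaussianPDFReal_mul_pow (n + 1))
  rw [integral_sub ((integrable_gaussianPDFReal_mul_pow n).const_mul _)
    (integrable_gaussianPDFReal_mul_pow _), integral_const_mul] at h
  linarith

lemma integral_pow_two_mul_gaussianReal (j : ℕ) :
    ∫ x, x ^ (2 * j) ∂gaussianReal 0 1 = (2 * j - 1)‼ := by
  induction j with
  | zero => simp
  | succ j ih =>
    rw [mul_add_one, integral_pow_add_two_gaussianReal, ih,
      show 2 * j + 2 - 1 = 2 * j + 1 by omega, Nat.doubleFactorial_add_one]
    push_cast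
    ring

lemma integral_sq_sub_one_pow_gaussianReal (k : ℕ) :
    ∫ x, (x ^ 2 - 1) ^ k ∂gaussianReal 0 1
      = ∑ m ∈ range (k + 1), (-1) ^ (k - m) * k.choose m * ((2 * m - 1)‼ : ℝ) := by
  have hexp (x : ℝ) : (x ^ 2 - 1) ^ k
      = ∑ m ∈ range (k + 1), (-1) ^ (k - m) * k.choose m * x ^ (2 * m) := by
    rw [sub_eq_add_neg, add_pow]
    exact sum_congr rfl fun m _ => by ring
  simp_rw [hexp]
  rw [integral_finsetSum _ fun m _ => (integrable_pow_gaussianReal _).const_mul _]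
  simp_rw [integral_const_mul, integral_pow_two_mul_gaussianReal]

lemma integral_sq_sub_one_gaussianReal : ∫ x, (x ^ 2 - 1) ∂gaussianReal 0 1 = 0 := by
  simpa [sum_range_succ] using integral_sq_sub_one_pow_gaussianReal 1

lemma integral_sq_sub_one_sq_gaussianReal : ∫ x, (x ^ 2 - 1) ^ 2 ∂gaussianReal 0 1 = 2 := by
  norm_num [integral_sq_sub_one_pow_gaussianReal, sum_range_succ, Nat.choose]

lemma integral_sq_sub_one_pow_four_gaussianReal : ∫ x, (x ^ 2 - 1) ^ 4 ∂gaussianReal 0 1 = 60 := by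
  norm_num [integral_sq_sub_one_pow_gaussianReal, sum_range_succ, Nat.choose]

lemma memLp_sq_sub_one_gaussianReal : MemLp (fun x : ℝ => x ^ 2 - 1) 4 (gaussianReal 0 1) := by
  have hsq : MemLp (fun x : ℝ => x ^ 2) 4 (gaussianReal 0 1) := by
    convert (memLp_id_gaussianReal 8).norm_rpow_div 2 using 1
    · ext x; simp
    · exact ENNReal.eq_div_iff (by norm_num) (by norm_num) |>.2 (by norm_num)
  exact hsq.sub (memLp_const 1)

variable {Ω : Type*} [MeasurableSpace Ω] {P : Measure Ω} {W : Ω → ℝ}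

lemma HasLaw.memLp_const_mul_sq_sub_one (hW : HasLaw W (gaussianReal 0 1) P) (l : ℝ) :
    MemLp (fun ω => l * (W ω ^ 2 - 1)) 4 P :=
  (memLp_map_measure_iff (g := fun x => l * (x ^ 2 - 1)) (by fun_prop) hW.aemeasurable).1
    (hW.map_eq ▸ memLp_sq_sub_one_gaussianReal.const_mul l)

lemma HasLaw.integral_const_mul_sq_sub_one_pow (hW : HasLaw W (gaussianReal 0 1) P) (l : ℝ)
    (j : ℕ) :
    ∫ ω, (l * (W ω ^ 2 - 1)) ^ j ∂P = l ^ j * ∫ x, (x ^ 2 - 1) ^ j ∂gaussianReal 0 1 := by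
  rw [← integral_const_mul, ← hW.integral_comp (by fun_prop)]
  simp [mul_pow]

end Gaussian

end ProbabilityTheory

theorem stmt3_general {Ω : Type*} [MeasureSpace Ω] [IsProbabilityMeasure (ℙ : Measure Ω)]
    (n : ℕ) (g : Fin n → Ω → ℝ)
    (hindep : iIndepFun g ℙ)
    (hmeas : ∀ k, Measurable (g k))
    (hgauss : ∀ k, Measure.map (g k) ℙ = gaussianReal 0 1)
    (lam : Fin n → ℝ) (hsum : 0 < ∑ k, lam k) :
    1 / (15 * (2 : ℝ) ^ ((4 : ℝ) / 3))
      ≤ (ℙ {ω | ∑ k, lam k < ∑ k, lam k * (g k ω) ^ 2}).toReal := by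
  set Y : Fin n → Ω → ℝ := fun k ω => lam k * (g k ω ^ 2 - 1)
  have hlaw (k : Fin n) : HasLaw (g k) (gaussianReal 0 1) ℙ := ⟨(hmeas k).aemeasurable, hgauss k⟩
  have hYind : iIndepFun Y ℙ := hindep.comp (fun k x => lam k * (x ^ 2 - 1)) fun k => by fun_prop
  have hYLp (k : Fin n) : MemLp (Y k) 4 ℙ := (hlaw k).memLp_const_mul_sq_sub_one (lam k)
  have hY2Lp (k : Fin n) : MemLp (Y k) 2 ℙ := (hYLp k).mono_exponent (by norm_num)
  have hY0 (k : Fin n) : ∫ ω, Y k ω = 0 := by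
    simpa [integral_sq_sub_one_gaussianReal] using
      (hlaw k).integral_const_mul_sq_sub_one_pow (lam k) 1
  have hY2 (k : Fin n) : ∫ ω, Y k ω ^ 2 = 2 * lam k ^ 2 := by
    rw [(hlaw k).integral_const_mul_sq_sub_one_pow, integral_sq_sub_one_sq_gaussianReal, mul_comm]
  have hY4 (k : Fin n) : ∫ ω, Y k ω ^ 4 = 15 * (∫ ω, Y k ω ^ 2) ^ 2 := by
    rw [hY2, (hlaw k).integral_const_mul_sq_sub_one_pow, integral_sq_sub_one_pow_four_gaussianReal]
    ring
  have hvar : 0 < ∫ ω, (∑ k, Y k ω) ^ 2 := by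
    obtain ⟨k, -, hk⟩ := exists_ne_zero_of_sum_ne_zero hsum.ne'
    rw [hYind.integral_sum_sq hY2Lp hY0]
    exact sum_pos' (fun k _ => hY2 k ▸ by positivity) ⟨k, mem_univ k, hY2 k ▸ by positivity⟩
  have hkurt := hYind.integral_sum_pow_four_le (fun k => by fun_prop) hYLp hY0 (by norm_num)
    (fun k => (hY4 k).le) univ
  rw [← hYind.integral_sum_sq hY2Lp hY0] at hkurt
  have hevent : {ω | ∑ k, lam k < ∑ k, lam k * (g k ω) ^ 2} = {ω | 0 < ∑ k, Y k ω} := by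
    ext ω
    simp [Y, mul_sub, sum_sub_distrib]
  rw [hevent]
  exact one_div_le_measureReal_pos_of_integral_pow_four_le (by fun_prop)
    (memLp_finsetSum univ fun k _ => hYLp k)
    (by simp [integral_finsetSum _ fun k _ => (hYLp k).integrable (by norm_num), hY0]) hvar hkurt

/-- For independent standard Gaussians `g₁, …, gₙ` and nonnegative weights `λₖ` that are
not all zero, `P(Σ λₖ gₖ² > Σ λₖ) ≥ 1/(15 · 2^{4/3})`. -/
theorem stmt3 {Ω : Type*} [MeasureSpace Ω] [IsProbabilityMeasure (ℙ : Measure Ω)]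
    (n : ℕ) (g : Fin n → Ω → ℝ)
    (hindep : iIndepFun g ℙ)
    (hmeas : ∀ k, Measurable (g k))
    (hgauss : ∀ k, Measure.map (g k) ℙ = gaussianReal 0 1)
    (lam : Fin n → ℝ) (hlam : ∀ k, 0 ≤ lam k) (hsum : 0 < ∑ k, lam k) :
    1 / (15 * (2 : ℝ) ^ ((4 : ℝ) / 3))
      ≤ (ℙ {ω | ∑ k, lam k < ∑ k, lam k * (g k ω) ^ 2}).toReal :=
  stmt3_general n g hindep hmeas hgauss lam hsum
end

section
/- For every λ ≥ 1, √λ · exp(−(λ+1)/4) · I₀((λ−1)/4) > √(2/(πe)). -/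
/-!
Write `λ = 4s + 1` with `s ≥ 0`. Since `exp (-(λ+1)/4) = e^{-s} e^{-1/2}` and
`√(2/(πe)) = √(2/π) e^{-1/2}`, the claim is `√(2/π) < √(4s+1) e^{-s} I₀(s)`.

For `s ≤ 1` it is enough that `I₀ ≥ 1` (pair `θ` with `π - θ`, then `cosh ≥ 1`) and that
`(4s+1) e^{-2s} > 2/π`, which follows from the chord of `exp` over `[0, 2]`.

For `s ≥ 1`, `cos θ ≥ 1 - θ²/2` gives `e^{-s} ∫₀^π e^{s cos θ} dθ ≥ ∫₀^π e^{-sθ²/2} dθ`,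
which is the half Gaussian integral `√(π/(2s))` minus a tail `O(e^{-π²s/2})`. The main term then
contributes `√((4s+1)/(2πs)) = √(2/π) √(1 + 1/(4s))`, which exceeds `√(2/π)` by at least
`1/(11s)`, far more than the tail.
-/

open MeasureTheory Real Set Filter Topology

theorem pi_le_integral_exp_mul_cos (s : ℝ) : π ≤ ∫ θ in (0 : ℝ)..π, exp (s * cos θ) := by
  have hint : ∀ c : ℝ, IntervalIntegrable (fun θ => exp (c * cos θ)) volume 0 π := fun c =>
    (by fun_prop : Continuous fun θ => exp (c * cos θ)).intervalIntegrable 0 π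
  have hreflect :
      ∫ θ in (0 : ℝ)..π, exp (s * cos θ) = ∫ θ in (0 : ℝ)..π, exp (-s * cos θ) := by
    have h := intervalIntegral.integral_comp_sub_left (a := 0) (b := π)
      (fun θ => exp (s * cos θ)) π
    simp only [sub_zero, sub_self, cos_pi_sub, mul_neg] at h
    simp only [h.symm, neg_mul]
  have hcosh : ∀ y : ℝ, 2 ≤ exp y + exp (-y) := fun y => by
    linarith [one_le_cosh y, cosh_eq y]
  have hsum : π * 2 ≤ ∫ θ in (0 : ℝ)..π, (exp (s * cos θ) + exp (-s * cos θ)) := by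
    simpa using intervalIntegral.integral_mono_on pi_pos.le intervalIntegrable_const
      ((hint s).add (hint (-s))) fun θ _ => neg_mul s (cos θ) ▸ hcosh (s * cos θ)
  rw [intervalIntegral.integral_add (hint s) (hint (-s)), ← hreflect] at hsum
  linarith

section GaussianTail

variable {a b : ℝ}

theorem hasDerivAt_neg_exp_neg_mul_sq_div (hb : b ≠ 0) (x : ℝ) :
    HasDerivAt (fun x => -exp (-b * x ^ 2) / (2 * b)) (x * exp (-b * x ^ 2)) x := by
  have h := ((((hasDerivAt_pow 2 x).const_mul (-b)).exp).neg).div_const (2 * b)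
  refine h.congr_deriv ?_
  field_simp
  ring

theorem tendsto_neg_exp_neg_mul_sq_div_atTop (hb : 0 < b) :
    Tendsto (fun x => -exp (-b * x ^ 2) / (2 * b)) atTop (𝓝 0) := by
  have h : Tendsto (fun x : ℝ => -b * x ^ 2) atTop atBot :=
    (tendsto_pow_atTop two_ne_zero).const_mul_atTop_of_neg (neg_neg_of_pos hb)
  simpa using ((tendsto_exp_atBot.comp h).neg).div_const (2 * b)

theorem integrableOn_Ioi_mul_exp_neg_mul_sq (hb : 0 < b) (ha : 0 ≤ a) :
    IntegrableOn (fun x => x * exp (-b * x ^ 2)) (Ioi a) :=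
  integrableOn_Ioi_deriv_of_nonneg' (fun x _ => hasDerivAt_neg_exp_neg_mul_sq_div hb.ne' x)
    (fun _ hx => mul_nonneg (ha.trans hx.le) (exp_pos _).le)
    (tendsto_neg_exp_neg_mul_sq_div_atTop hb)

theorem integral_Ioi_mul_exp_neg_mul_sq (hb : 0 < b) (ha : 0 ≤ a) :
    ∫ x in Ioi a, x * exp (-b * x ^ 2) = exp (-b * a ^ 2) / (2 * b) := by
  rw [integral_Ioi_of_hasDerivAt_of_nonneg'
    (fun x _ => hasDerivAt_neg_exp_neg_mul_sq_div hb.ne' x)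
    (fun _ hx => mul_nonneg (ha.trans hx.le) (exp_pos _).le)
    (tendsto_neg_exp_neg_mul_sq_div_atTop hb)]
  ring

theorem integral_Ioi_exp_neg_mul_sq_le (hb : 0 < b) (ha : 0 < a) :
    ∫ x in Ioi a, exp (-b * x ^ 2) ≤ exp (-b * a ^ 2) / (2 * a * b) := by
  calc ∫ x in Ioi a, exp (-b * x ^ 2) ≤ ∫ x in Ioi a, a⁻¹ * (x * exp (-b * x ^ 2)) := by
        refine setIntegral_mono_on (integrable_exp_neg_mul_sq hb).integrableOn
          ((integrableOn_Ioi_mul_exp_neg_mul_sq hb ha.le).const_mul _) measurableSet_Ioi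
          fun x hx => ?_
        have hx : 1 ≤ a⁻¹ * x := by rw [← div_eq_inv_mul, one_le_div ha]; exact hx.le
        rw [← mul_assoc]
        exact le_mul_of_one_le_left (exp_pos _).le hx
    _ = exp (-b * a ^ 2) / (2 * a * b) := by
        rw [integral_const_mul, integral_Ioi_mul_exp_neg_mul_sq hb ha.le]
        field_simp

theorem sqrt_pi_div_two_sub_le_integral_exp_neg_mul_sq (hb : 0 < b) (ha : 0 < a) :
    √(π / b) / 2 - exp (-b * a ^ 2) / (2 * a * b) ≤ ∫ x in (0 : ℝ)..a, exp (-b * x ^ 2) := by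
  have hint := (integrable_exp_neg_mul_sq hb).integrableOn (s := Ioi a)
  have hsplit : ∫ x in Ioi 0, exp (-b * x ^ 2)
      = (∫ x in (0 : ℝ)..a, exp (-b * x ^ 2)) + ∫ x in Ioi a, exp (-b * x ^ 2) := by
    rw [intervalIntegral.integral_of_le ha.le, ← setIntegral_union (Ioc_disjoint_Ioi le_rfl)
      measurableSet_Ioi (integrable_exp_neg_mul_sq hb).integrableOn hint,
      Ioc_union_Ioi_eq_Ioi ha.le]
  rw [integral_gaussian_Ioi] at hsplit
  linarith [integral_Ioi_exp_neg_mul_sq_le hb ha]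

end GaussianTail

theorem exp_mul_integral_exp_neg_mul_sq_le_integral_exp_mul_cos {s : ℝ} (hs : 0 ≤ s) :
    exp s * ∫ θ in (0 : ℝ)..π, exp (-(s / 2) * θ ^ 2) ≤ ∫ θ in (0 : ℝ)..π, exp (s * cos θ) := by
  rw [← intervalIntegral.integral_const_mul]
  refine intervalIntegral.integral_mono_on pi_pos.le
    ((by fun_prop : Continuous fun θ : ℝ => exp s * exp (-(s / 2) * θ ^ 2)).intervalIntegrable
      _ _)
    ((by fun_prop : Continuous fun θ => exp (s * cos θ)).intervalIntegrable _ _) fun θ _ => ?_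
  rw [← exp_add, exp_le_exp]
  nlinarith [mul_le_mul_of_nonneg_left (one_sub_sq_div_two_le_cos (x := θ)) hs]

theorem two_mul_exp_lt_pi_mul {t : ℝ} (h0 : 0 ≤ t) (h2 : t ≤ 2) :
    2 * exp t < π * (2 * t + 1) := by
  have hchord : exp t ≤ 1 + (exp 2 - 1) * (t / 2) := by
    have h := convexOn_exp.2 (mem_univ 0) (mem_univ 2) (by linarith : 0 ≤ 1 - t / 2)
      (by linarith : 0 ≤ t / 2) (by ring)
    simp only [smul_eq_mul, mul_zero, zero_add, exp_zero, mul_one] at h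
    rw [show t / 2 * 2 = t by ring] at h
    linarith
  have he : exp 2 < 7.3890561 := by
    have h : exp 2 = exp 1 ^ 2 := by rw [← exp_nat_mul]; norm_num
    nlinarith [exp_one_lt_d9, exp_pos 1]
  nlinarith [pi_gt_d6]

theorem sqrt_two_div_pi_lt_sqrt_mul_exp_neg {s : ℝ} (h0 : 0 ≤ s) (h1 : s ≤ 1) :
    √(2 / π) < √(4 * s + 1) * exp (-s) := by
  rw [← sqrt_sq (exp_pos (-s)).le, ← sqrt_mul (by linarith)]
  refine sqrt_lt_sqrt (by positivity) ?_
  rw [sq, ← exp_add, show -s + -s = -(2 * s) by ring, exp_neg, ← div_eq_mul_inv,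
    div_lt_div_iff₀ pi_pos (exp_pos _)]
  linarith [two_mul_exp_lt_pi_mul (t := 2 * s) (by linarith) (by linarith)]

theorem sqrt_two_div_pi_add_le_sqrt {s : ℝ} (hs : 1 ≤ s) :
    √(2 / π) + 1 / (11 * s) ≤ √((4 * s + 1) / (2 * π * s)) := by
  have hs0 : 0 < s := by linarith
  set a := √((4 * s + 1) / (2 * π * s)) with ha_def
  set c := √(2 / π) with hc_def
  have ha2 : a ^ 2 * (2 * π * s) = 4 * s + 1 := by
    rw [ha_def, sq_sqrt (by positivity)]; field_simp
  have hc2 : c ^ 2 * π = 2 := by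
    rw [hc_def, sq_sqrt (by positivity)]; field_simp
  have hca : c < a := sqrt_lt_sqrt (by positivity) (by
    rw [div_lt_div_iff₀ pi_pos (by positivity)]; nlinarith [pi_pos])
  have ha : a ≤ 0.9 := by
    rw [ha_def, sqrt_le_left (by norm_num), div_le_iff₀ (by positivity)]
    nlinarith [pi_gt_d2]
  have hc : c ≤ 0.8 := by
    rw [hc_def, sqrt_le_left (by norm_num), div_le_iff₀ pi_pos]
    linarith [pi_gt_d2]
  -- `(a - c)(a + c) 2πs = 1`, so it suffices that `(a + c) 2π ≤ 11`
  have hsum : (a + c) * (2 * π) ≤ 11 := by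
    nlinarith [pi_lt_d2, pi_pos, sqrt_nonneg (2 / π)]
  have hgap : 1 / (11 * s) ≤ a - c := by
    rw [div_le_iff₀ (by positivity)]
    nlinarith [mul_le_mul_of_nonneg_left (mul_le_mul_of_nonneg_right hsum hs0.le)
      (sub_nonneg.2 hca.le)]
  linarith

theorem sqrt_mul_exp_neg_div_lt {s : ℝ} (hs : 1 ≤ s) :
    √(4 * s + 1) * exp (-(s / 2) * π ^ 2) / (π ^ 2 * s) < 1 / (11 * s) := by
  have hpi : 9 < π ^ 2 := by nlinarith [pi_gt_three]
  have hsqrt : √(4 * s + 1) ≤ exp (2 * s) := by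
    rw [sqrt_le_left (exp_pos _).le, sq, ← exp_add]
    linarith [add_one_le_exp (2 * s + 2 * s)]
  have hdecay : exp (2 * s) * exp (-(s / 2) * π ^ 2) ≤ exp (-2) := by
    rw [← exp_add, exp_le_exp]
    nlinarith [mul_le_mul_of_nonneg_left hpi.le (by linarith : (0 : ℝ) ≤ s)]
  have he2 : 3 * exp (-2) ≤ 1 := by
    rw [exp_neg, ← div_eq_mul_inv, div_le_one (exp_pos 2)]
    linarith [add_one_le_exp 2]
  have hsmall : √(4 * s + 1) * exp (-(s / 2) * π ^ 2) * 3 ≤ 1 := by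
    nlinarith [mul_le_mul_of_nonneg_right hsqrt (exp_pos (-(s / 2) * π ^ 2)).le]
  rw [div_lt_div_iff₀ (by positivity) (by positivity)]
  nlinarith [mul_le_mul_of_nonneg_left hpi.le (by linarith : (0 : ℝ) ≤ s)]

theorem sqrt_two_div_pi_lt_of_le_one {s : ℝ} (h0 : 0 ≤ s) (h1 : s ≤ 1) :
    √(2 / π) <
      √(4 * s + 1) * exp (-s) * ((1 / π) * ∫ θ in (0 : ℝ)..π, exp (s * cos θ)) := by
  have hI : 1 ≤ (1 / π) * ∫ θ in (0 : ℝ)..π, exp (s * cos θ) := by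
    rw [one_div_mul_eq_div, one_le_div pi_pos]
    exact pi_le_integral_exp_mul_cos s
  calc √(2 / π) < √(4 * s + 1) * exp (-s) := sqrt_two_div_pi_lt_sqrt_mul_exp_neg h0 h1
    _ ≤ _ := le_mul_of_one_le_right (by positivity) hI

theorem sqrt_two_div_pi_lt_of_one_le {s : ℝ} (hs : 1 ≤ s) :
    √(2 / π) <
      √(4 * s + 1) * exp (-s) * ((1 / π) * ∫ θ in (0 : ℝ)..π, exp (s * cos θ)) := by
  have hs0 : 0 < s := by linarith
  set E := exp (-(s / 2) * π ^ 2)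
  set G := √(π / (s / 2)) / 2 - E / (2 * π * (s / 2)) with hG
  have hI : exp s * G ≤ ∫ θ in (0 : ℝ)..π, exp (s * cos θ) :=
    (mul_le_mul_of_nonneg_left (sqrt_pi_div_two_sub_le_integral_exp_neg_mul_sq (by positivity)
      pi_pos) (exp_pos s).le).trans
      (exp_mul_integral_exp_neg_mul_sq_le_integral_exp_mul_cos hs0.le)
  have hmain : √(4 * s + 1) * √(π / (s / 2)) / (2 * π) = √((4 * s + 1) / (2 * π * s)) := by
    rw [show (4 * s + 1) / (2 * π * s) = (4 * s + 1) * (π / (s / 2)) / (2 * π) ^ 2 by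
      field_simp, sqrt_div' ((4 * s + 1) * (π / (s / 2))) (by positivity),
      sqrt_sq (by positivity), sqrt_mul (by linarith)]
  have hlower : √(4 * s + 1) * exp (-s) * ((1 / π) * (exp s * G))
      = √((4 * s + 1) / (2 * π * s)) - √(4 * s + 1) * E / (π ^ 2 * s) := by
    rw [← hmain, exp_neg, hG]
    field_simp
  calc √(2 / π) < √((4 * s + 1) / (2 * π * s)) - √(4 * s + 1) * E / (π ^ 2 * s) := by
        linarith [sqrt_two_div_pi_add_le_sqrt hs, sqrt_mul_exp_neg_div_lt hs]
    _ = _ := hlower.symm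
    _ ≤ _ := by gcongr

/-- For every `λ ≥ 1`, `√λ exp(-(λ+1)/4) I₀((λ-1)/4) > √(2/(π e))`, where
`I₀(s) = (1/π) ∫₀^π exp(s cos θ) dθ` is the modified Bessel function of the first kind. -/
theorem stmt5 (lam : ℝ) (hlam : 1 ≤ lam)
    (I₀ : ℝ → ℝ) (hI₀ : I₀ = fun s => (1 / π) * ∫ θ in (0 : ℝ)..π, Real.exp (s * Real.cos θ)) :
    Real.sqrt (2 / (π * Real.exp 1))
      < Real.sqrt lam * Real.exp (-((lam + 1) / 4)) * I₀ ((lam - 1) / 4) := by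
  obtain ⟨s, hs, rfl⟩ : ∃ s, 0 ≤ s ∧ lam = 4 * s + 1 := ⟨(lam - 1) / 4, by linarith, by ring⟩
  have hcenter : √(2 / π) < √(4 * s + 1) * exp (-s) * I₀ s := by
    rw [hI₀]
    rcases le_total s 1 with h1 | h1
    · exact sqrt_two_div_pi_lt_of_le_one hs h1
    · exact sqrt_two_div_pi_lt_of_one_le h1
  have hlhs : √(2 / (π * exp 1)) = √(2 / π) * exp (-(1 / 2)) := by
    rw [div_mul_eq_div_div, sqrt_div' _ (exp_pos 1).le, ← exp_half, exp_neg, div_eq_mul_inv]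
  have hexp : exp (-((4 * s + 1 + 1) / 4)) = exp (-s) * exp (-(1 / 2)) := by
    rw [← exp_add]; ring_nf
  rw [hlhs, hexp, show (4 * s + 1 - 1) / 4 = s by ring]
  calc √(2 / π) * exp (-(1 / 2)) < √(4 * s + 1) * exp (-s) * I₀ s * exp (-(1 / 2)) :=
        mul_lt_mul_of_pos_right hcenter (exp_pos _)
    _ = _ := by ring
end

section
/- For every u > 0, ∫₀^{π√u} e^{-s²/2} ds > √(2πu/(4u+1)). -/
open MeasureTheory Real Set

/-! `(∫₀^t e^{-s²/2} ds)²` is the integral of `e^{-|p|²/2}` over the square `(0,t]²`, which contains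
the quarter disk of radius `t`; in polar coordinates the integral over that quarter disk is
`π/2 · (1 - e^{-t²/2})`. For `t = π√u` this exceeds `2πu/(4u+1)` because
`e^{π²u/2} ≥ 1 + π²u/2 > 1 + 4u`. -/

theorem setIntegral_polarCoord_symm_image_sector (f : ℝ → ℝ) {R α β : ℝ}
    (hα : -π ≤ α) (hαβ : α ≤ β) (hβ : β ≤ π) :
    ∫ p in polarCoord.symm '' (Ioo 0 R ×ˢ Ioo α β), f (p.1 ^ 2 + p.2 ^ 2)
      = (β - α) * ∫ r in Ioo 0 R, r * f (r ^ 2) := by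
  have hsub : Ioo 0 R ×ˢ Ioo α β ⊆ polarCoord.target :=
    prod_mono Ioo_subset_Ioi_self (Ioo_subset_Ioo hα hβ)
  rw [integral_image_eq_integral_abs_det_fderiv_smul volume
    (measurableSet_Ioo.prod measurableSet_Ioo)
    (fun p _ ↦ (hasFDerivAt_polarCoord_symm p).hasFDerivWithinAt)
    (polarCoord.symm.injOn.mono hsub)]
  have hintegrand : ∀ p ∈ Ioo 0 R ×ˢ Ioo α β,
      |(fderivPolarCoordSymm p).det| • f ((polarCoord.symm p).1 ^ 2 + (polarCoord.symm p).2 ^ 2)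
        = p.1 * f (p.1 ^ 2) * 1 := by
    rintro p ⟨hr, -⟩
    rw [det_fderivPolarCoordSymm, abs_of_pos hr.1, polarCoord_symm_apply, smul_eq_mul, mul_one]
    congr 2
    linear_combination p.1 ^ 2 * sin_sq_add_cos_sq p.2
  rw [setIntegral_congr_fun (measurableSet_Ioo.prod measurableSet_Ioo) hintegrand, Measure.volume_eq_prod,
    setIntegral_prod_mul (fun r ↦ r * f (r ^ 2)) (fun _ ↦ (1 : ℝ))]
  simp [hαβ, mul_comm]

theorem sq_intervalIntegral_eq_setIntegral_prod (f : ℝ → ℝ) {a b : ℝ} (hab : a ≤ b) :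
    (∫ x in a..b, f x) ^ 2 = ∫ p in Ioc a b ×ˢ Ioc a b, f p.1 * f p.2 := by
  rw [intervalIntegral.integral_of_le hab, Measure.volume_eq_prod, setIntegral_prod_mul, sq]

theorem setIntegral_Ioo_mul_exp_neg_sq_div_two {R : ℝ} (hR : 0 ≤ R) :
    ∫ r in Ioo 0 R, r * exp (-r ^ 2 / 2) = 1 - exp (-R ^ 2 / 2) := by
  have hderiv (r : ℝ) : HasDerivAt (fun r ↦ -exp (-r ^ 2 / 2)) (r * exp (-r ^ 2 / 2)) r := by
    refine ((hasDerivAt_pow 2 r).neg.div_const 2).exp.neg.congr_deriv ?_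
    simp only [Pi.neg_apply]
    push_cast
    ring
  rw [← integral_Ioc_eq_integral_Ioo, ← intervalIntegral.integral_of_le hR,
    intervalIntegral.integral_eq_sub_of_hasDerivAt (fun r _ ↦ hderiv r)
      ((by fun_prop : Continuous fun r : ℝ ↦ r * exp (-r ^ 2 / 2)).intervalIntegrable _ _)]
  simp only [zero_pow two_ne_zero, neg_zero, zero_div, exp_zero]
  ring

theorem polarCoord_symm_image_subset_Ioc_prod_Ioc {R : ℝ} :
    polarCoord.symm '' (Ioo 0 R ×ˢ Ioo 0 (π / 2)) ⊆ Ioc 0 R ×ˢ Ioc 0 R := by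
  rintro _ ⟨⟨r, θ⟩, ⟨⟨hr, hrR⟩, hθ, hθ'⟩, rfl⟩
  have hcos : 0 < cos θ := cos_pos_of_mem_Ioo ⟨by linarith, hθ'⟩
  have hsin : 0 < sin θ := sin_pos_of_pos_of_lt_pi hθ (by linarith [pi_pos])
  simp only [polarCoord_symm_apply, mem_prod, mem_Ioc]
  refine ⟨⟨by positivity, ?_⟩, by positivity, ?_⟩
  · nlinarith [cos_le_one θ]
  · nlinarith [sin_le_one θ]

theorem pi_div_two_mul_one_sub_exp_le_sq_integral {t : ℝ} (ht : 0 ≤ t) :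
    π / 2 * (1 - exp (-t ^ 2 / 2)) ≤ (∫ s in (0 : ℝ)..t, exp (-s ^ 2 / 2)) ^ 2 := by
  let g : ℝ × ℝ → ℝ := fun p ↦ exp (-p.1 ^ 2 / 2) * exp (-p.2 ^ 2 / 2)
  have hg_cont : Continuous g := by fun_prop
  calc π / 2 * (1 - exp (-t ^ 2 / 2))
      = ∫ p in polarCoord.symm '' (Ioo 0 t ×ˢ Ioo 0 (π / 2)), g p := by
        simp only [g, ← exp_add, show ∀ x y : ℝ, -x ^ 2 / 2 + -y ^ 2 / 2 = -(x ^ 2 + y ^ 2) / 2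
          from fun x y ↦ by ring]
        rw [setIntegral_polarCoord_symm_image_sector (fun x ↦ exp (-x / 2)) (by linarith [pi_pos])
          (by linarith [pi_pos]) (by linarith [pi_pos])]
        simp only [sub_zero]
        rw [setIntegral_Ioo_mul_exp_neg_sq_div_two ht]
    _ ≤ ∫ p in Ioc 0 t ×ˢ Ioc 0 t, g p :=
        setIntegral_mono_set
          ((hg_cont.continuousOn.integrableOn_compact (isCompact_Icc.prod isCompact_Icc)).mono_set
            (prod_mono Ioc_subset_Icc_self Ioc_subset_Icc_self))
          (ae_of_all _ fun p ↦ by positivity)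
          polarCoord_symm_image_subset_Ioc_prod_Ioc.eventuallyLE
    _ = (∫ s in (0 : ℝ)..t, exp (-s ^ 2 / 2)) ^ 2 :=
        (sq_intervalIntegral_eq_setIntegral_prod (fun s ↦ exp (-s ^ 2 / 2)) ht).symm

theorem two_pi_mul_div_lt_pi_div_two_mul_one_sub_exp {u : ℝ} (hu : 0 < u) :
    2 * π * u / (4 * u + 1) < π / 2 * (1 - exp (-(π ^ 2 * u) / 2)) := by
  have hpi : 8 < π ^ 2 := by nlinarith [pi_gt_three]
  have hexp : 1 + 4 * u < exp (π ^ 2 * u / 2) := by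
    nlinarith [add_one_lt_exp (by positivity : π ^ 2 * u / 2 ≠ 0)]
  have hexp' : exp (-(π ^ 2 * u) / 2) * (4 * u + 1) < 1 := by
    rw [neg_div, exp_neg, inv_mul_lt_iff₀ (exp_pos _)]
    linarith
  rw [div_lt_iff₀ (by positivity)]
  nlinarith [pi_pos]

/-- For every `u > 0`, `∫₀^{π√u} e^{-s²/2} ds > √(2πu/(4u+1))`. -/
theorem stmt6 (u : ℝ) (hu : 0 < u) :
    Real.sqrt (2 * π * u / (4 * u + 1))
      < ∫ s in (0 : ℝ)..(π * Real.sqrt u), Real.exp (-s ^ 2 / 2) := by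
  have ht : (π * √u) ^ 2 = π ^ 2 * u := by rw [mul_pow, sq_sqrt hu.le]
  have hF : 0 ≤ ∫ s in (0 : ℝ)..(π * √u), exp (-s ^ 2 / 2) :=
    intervalIntegral.integral_nonneg (by positivity) fun s _ ↦ (exp_pos _).le
  calc √(2 * π * u / (4 * u + 1))
      < √(π / 2 * (1 - exp (-(π * √u) ^ 2 / 2))) := by
        rw [ht]
        exact sqrt_lt_sqrt (by positivity) (two_pi_mul_div_lt_pi_div_two_mul_one_sub_exp hu)
    _ ≤ √((∫ s in (0 : ℝ)..(π * √u), exp (-s ^ 2 / 2)) ^ 2) :=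
        sqrt_le_sqrt (pi_div_two_mul_one_sub_exp_le_sq_integral (by positivity))
    _ = ∫ s in (0 : ℝ)..(π * √u), exp (-s ^ 2 / 2) := sqrt_sq hF
end

section
/- Define ψ(u) = ∫₀^{π√u} e^{-s²/2} ds − √(2πu/(4u+1)) for u > 0. Then ψ'(u) has the same sign as φ(u) = log√(π/2) − (π²/2)u + (3/2)log(4u+1), and φ is strictly concave on (0,∞), positive at u = 0, and tends to −∞ as u → ∞. -/
open MeasureTheory Real Filter Asymptotics Set

/-! The derivative factors as `ψ'(u) = √(π/(2u)) · (A(u) − B(u))` with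
`A(u) = √(π/2) e^{-π²u/2}` and `B(u) = (4u+1)^{-3/2}`, and `φ = log A − log B`; since `log` is
strictly increasing, `ψ'(u)` and `φ(u)` have the same sign. The function `φ` is an affine
function plus a positive multiple of `log (4u+1)`, hence strictly concave, and since
`log (4u+1) = o(u)` the term `−(π²/2) u` drives it to `−∞`. -/

lemma Real.sign_eq_sign_of_iff {x y : ℝ} (hpos : 0 < x ↔ 0 < y) (hneg : x < 0 ↔ y < 0) :
    Real.sign x = Real.sign y := by
  simp only [Real.sign, hpos, hneg]

lemma Real.sign_mul_sub_eq_sign_log_sub {c a b : ℝ} (hc : 0 < c) (ha : 0 < a) (hb : 0 < b) :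
    Real.sign (c * (a - b)) = Real.sign (log a - log b) :=
  Real.sign_eq_sign_of_iff
    (by rw [mul_pos_iff_of_pos_left hc, sub_pos, sub_pos, log_lt_log_iff hb ha])
    (by rw [← neg_pos, ← mul_neg, mul_pos_iff_of_pos_left hc, neg_pos, sub_neg, sub_neg,
      log_lt_log_iff ha hb])

lemma hasDerivAt_integral_exp_neg_sq_half_mul_sqrt (c : ℝ) {u : ℝ} (hu : 0 < u) :
    HasDerivAt (fun u => ∫ s in (0 : ℝ)..c * √u, exp (-s ^ 2 / 2))
      (exp (-c ^ 2 * u / 2) * (c * (1 / (2 * √u)))) u := by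
  have hcont : Continuous fun s : ℝ => exp (-s ^ 2 / 2) := by fun_prop
  have hF := intervalIntegral.integral_hasDerivAt_right (hcont.intervalIntegrable 0 (c * √u))
    hcont.stronglyMeasurable.stronglyMeasurableAtFilter hcont.continuousAt
  refine (hF.comp u ((hasDerivAt_sqrt hu.ne').const_mul c)).congr_deriv ?_
  rw [mul_pow, sq_sqrt hu.le, neg_mul]

lemma rpow_neg_three_halves {x : ℝ} (hx : 0 < x) : x ^ (-(3 / 2) : ℝ) = (x * √x)⁻¹ := by
  rw [rpow_neg hx.le, show (3 / 2 : ℝ) = 1 + 1 / 2 by norm_num, rpow_add hx, rpow_one,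
    sqrt_eq_rpow]

lemma hasDerivAt_sqrt_mul_div_mul_add_one {k a u : ℝ} (hk : 0 < k) (hu : 0 < u)
    (hau : 0 < a * u + 1) :
    HasDerivAt (fun u => √(k * u / (a * u + 1)))
      (√(k / u) / 2 * (a * u + 1) ^ (-(3 / 2) : ℝ)) u := by
  have hq : HasDerivAt (fun u => k * u / (a * u + 1)) (k / (a * u + 1) ^ 2) u := by
    refine (((hasDerivAt_id u).const_mul k).div (((hasDerivAt_id u).const_mul a).add_const 1)
      hau.ne').congr_deriv ?_
    simp only [id, mul_one]
    ring
  refine (hq.sqrt (by positivity)).congr_deriv ?_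
  rw [rpow_neg_three_halves hau, sqrt_div' _ hu.le, sqrt_div' _ hau.le, sqrt_mul hk.le]
  have := sqrt_pos.2 hu
  have := sqrt_pos.2 hk
  have := sqrt_pos.2 hau
  field_simp
  rw [sq_sqrt hk.le, sq_sqrt hau.le]
  ring

lemma hasDerivAt_psi {u : ℝ} (hu : 0 < u) :
    HasDerivAt (fun u => (∫ s in (0 : ℝ)..(π * √u), exp (-s ^ 2 / 2)) - √(2 * π * u / (4 * u + 1)))
      (√(π / (2 * u)) * (√(π / 2) * exp (-π ^ 2 * u / 2) - (4 * u + 1) ^ (-(3 / 2) : ℝ))) u := by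
  refine ((hasDerivAt_integral_exp_neg_sq_half_mul_sqrt π hu).sub
    (hasDerivAt_sqrt_mul_div_mul_add_one (by positivity) hu (by positivity))).congr_deriv ?_
  have hfac : √(π / (2 * u)) * √(π / 2) = π * (1 / (2 * √u)) := by
    rw [← sqrt_mul (by positivity), sqrt_eq_iff_mul_self_eq (by positivity) (by positivity)]
    field_simp
    rw [sq_sqrt hu.le]
  have hk : √(2 * π / u) / 2 = √(π / (2 * u)) := by
    rw [div_eq_iff two_ne_zero, ← sqrt_mul_self zero_le_two, ← sqrt_mul (by positivity)]
    congr 1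
    field_simp
    ring
  rw [hk, ← hfac]
  ring

lemma log_sqrt_pi_div_two_mul_exp_sub_log_rpow (u : ℝ) (hu : 0 < 4 * u + 1) :
    log (√(π / 2) * exp (-π ^ 2 * u / 2)) - log ((4 * u + 1) ^ (-(3 / 2) : ℝ))
      = log √(π / 2) - π ^ 2 / 2 * u + 3 / 2 * log (4 * u + 1) := by
  rw [log_mul (by positivity) (exp_ne_zero _), log_exp, log_rpow hu]
  ring

lemma strictConcaveOn_sub_mul_add_mul_log {a c : ℝ} (ha : 0 < a) (hc : 0 < c) (b m : ℝ) :
    StrictConcaveOn ℝ (Ioi 0) (fun u => b - m * u + c * log (a * u + 1)) := by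
  refine ⟨convex_Ioi 0, fun x hx y hy hxy s t hs ht hst => ?_⟩
  have hx' : a * x + 1 ∈ Ioi (0 : ℝ) := by simp only [mem_Ioi] at hx ⊢; positivity
  have hy' : a * y + 1 ∈ Ioi (0 : ℝ) := by simp only [mem_Ioi] at hy ⊢; positivity
  have hlog := strictConcaveOn_log_Ioi.2 hx' hy' (by simpa [ha.ne'] using hxy) hs ht hst
  have hcomb : s • (a * x + 1) + t • (a * y + 1) = a * (s • x + t • y) + 1 := by
    simp only [smul_eq_mul]; linear_combination hst
  rw [hcomb] at hlog
  simp only [smul_eq_mul] at hlog ⊢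
  have := mul_lt_mul_of_pos_left hlog hc
  linear_combination this + b * hst

lemma isLittleO_log_mul_add_one_atTop {a : ℝ} (ha : 0 < a) :
    (fun u => log (a * u + 1)) =o[atTop] id := by
  have htend : Tendsto (fun u => a * u + 1) atTop atTop :=
    tendsto_atTop_add_const_right _ 1 (tendsto_id.const_mul_atTop ha)
  have hbig : (fun u => a * u + 1) =O[atTop] id :=
    ((isBigO_refl id atTop).const_mul_left a).add (isLittleO_const_id_atTop 1).isBigO
  exact (isLittleO_log_id_atTop.comp_tendsto htend).trans_isBigO hbig

lemma tendsto_sub_mul_add_mul_log_atBot {a m : ℝ} (ha : 0 < a) (hm : 0 < m) (b c : ℝ) :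
    Tendsto (fun u => b - m * u + c * log (a * u + 1)) atTop atBot := by
  have hlin : Tendsto (fun u => -m * u) atTop atBot :=
    tendsto_id.const_mul_atTop_of_neg (neg_lt_zero.2 hm)
  have hsmall : (fun u => b + c * log (a * u + 1)) =o[atTop] fun u => -m * u :=
    ((isLittleO_const_id_atTop b).add ((isLittleO_log_mul_add_one_atTop ha).const_mul_left c))
      |>.trans_isBigO ((isBigO_refl id atTop).const_mul_right' (neg_ne_zero.2 hm.ne').isUnit)
  refine ((hsmall.add_isEquivalent IsEquivalent.refl).symm.tendsto_atBot hlin).congr fun u => ?_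
  simp only [Pi.add_apply]
  ring

lemma log_sqrt_pi_div_two_pos : 0 < log √(π / 2) :=
  log_pos ((lt_sqrt zero_le_one).2 (by linarith [pi_gt_three]))

/-- Let `ψ(u) = ∫₀^{π√u} e^{-s²/2} ds − √(2πu/(4u+1))`.  Then on `(0, ∞)` the derivative
`ψ'` has the same sign as `φ(u) = log √(π/2) − (π²/2) u + (3/2) log (4u+1)`; moreover `φ`
is strictly concave on `(0, ∞)`, positive at `0`, and tends to `−∞` at `∞`. -/
theorem stmt7
    (ψ φ : ℝ → ℝ)
    (hψ : ψ = fun u => (∫ s in (0 : ℝ)..(π * Real.sqrt u), Real.exp (-s ^ 2 / 2))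
        - Real.sqrt (2 * π * u / (4 * u + 1)))
    (hφ : φ = fun u => Real.log (Real.sqrt (π / 2)) - π ^ 2 / 2 * u
        + 3 / 2 * Real.log (4 * u + 1)) :
    (∀ u > (0 : ℝ), Real.sign (deriv ψ u) = Real.sign (φ u))
      ∧ StrictConcaveOn ℝ (Set.Ioi (0 : ℝ)) φ
      ∧ 0 < φ 0
      ∧ Tendsto φ atTop atBot := by
  subst hψ hφ
  refine ⟨fun u hu => ?_, strictConcaveOn_sub_mul_add_mul_log four_pos (by norm_num) _ _,
    by simpa using log_sqrt_pi_div_two_pos,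
    tendsto_sub_mul_add_mul_log_atBot four_pos (by positivity) _ _⟩
  rw [(hasDerivAt_psi hu).deriv, Real.sign_mul_sub_eq_sign_log_sub (by positivity) (by positivity)
    (by positivity), log_sqrt_pi_div_two_mul_exp_sub_log_rpow u (by positivity)]
end
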